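/- arXiv:0709.0975 — 8 statements merged into one kernel-verified Lean document; each statement's English description precedes it below -/
import Mathlib

section
/- Let m₁,…,mₙ be positive integers with m_{i+1} dividing m_i for 1 ≤ i < n, and let 𝓜 be the right ideal of Matₙ(ℤ) generated by diag(m₁,…,mₙ). If A, B ∈ Matₙ(ℤ) satisfy AB ≡ Idₙ (mod 𝓜), then there exists P ∈ GLₙ(ℤ) such that AP ≡ diag(1,…,1,p) (mod 𝓜), where 0 ≤ p ≤ ⌊mₙ/2⌋ and gcd(p, mₙ) = 1 (with p = 0 if mₙ = 1). -/
/-!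
Induct on the size, peeling off the first row, whose modulus `m₀` is a multiple of all the
others. Row `0` of `A` is unimodular modulo `m₀` (its product with column `0` of `B` is
`≡ 1`), and column operations over `ℤ` — the Euclidean algorithm carried out with
transvections, then three more transvections — turn it into `e₀` modulo `m₀`. Then
`B₀₀ ≡ 1 (mod m₀)`, so right multiplication by `[[1, 0], [b, 1]]`, with `b` the rest of
column `0` of `B`, makes the first column `≡ A · (column 0 of B) ≡ e₀` modulo `𝓜`. This
leaves `A ≡ diag(1, A₂)` with `A₂` again right invertible modulo the remaining moduli. For a
`1 × 1` matrix `(a)`, the unit `a` modulo `mₙ` is multiplied by `±1` to land in `[0, mₙ/2]`.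
-/

open Function

theorem Int.gcd_eq_one_of_mul_modEq_one {a b n : ℤ} (h : a * b ≡ 1 [ZMOD n]) : a.gcd n = 1 := by
  obtain ⟨t, ht⟩ := Int.modEq_iff_dvd.1 h
  exact Int.isCoprime_iff_gcd_eq_one.1 ⟨b, t, by linear_combination -ht⟩

theorem Int.exists_sign_mul_modEq_le_half (a : ℤ) {M : ℤ} (hM : 0 < M) :
    ∃ ε p : ℤ, ε * ε = 1 ∧ a * ε ≡ p [ZMOD M] ∧ 0 ≤ p ∧ p ≤ M / 2 := by
  have h₀ := Int.emod_nonneg a hM.ne'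
  have h₁ := Int.emod_lt_of_pos a hM
  by_cases hr : a % M ≤ M / 2
  · exact ⟨1, a % M, by norm_num, by simpa using (Int.mod_modEq a M).symm, h₀, hr⟩
  · refine ⟨-1, M - a % M, by norm_num, Int.modEq_iff_dvd.2 ⟨1 + a / M, ?_⟩, by omega,
      by omega⟩
    rw [Int.emod_def]
    ring

theorem Int.exists_sign_mul_modEq_le_half_gcd_eq_one {a b M : ℤ} (hM : 0 < M)
    (hab : a * b ≡ 1 [ZMOD M]) :
    ∃ ε p : ℤ,
      ε * ε = 1 ∧ a * ε ≡ p [ZMOD M] ∧ 0 ≤ p ∧ p ≤ M / 2 ∧ p.gcd M = 1 := by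
  obtain ⟨ε, p, hε, hap, hp₀, hp⟩ := Int.exists_sign_mul_modEq_le_half a hM
  refine ⟨ε, p, hε, hap, hp₀, hp, Int.gcd_eq_one_of_mul_modEq_one (b := b * ε) ?_⟩
  calc p * (b * ε) ≡ a * ε * (b * ε) [ZMOD M] := (hap.mul_right _).symm
    _ = a * b * (ε * ε) := by ring
    _ ≡ 1 [ZMOD M] := by simpa [hε] using hab

theorem Fin.dvd_apply_zero_of_succ_dvd_castSucc {n : ℕ} {m : Fin (n + 1) → ℤ}
    (hdvd : ∀ i : Fin n, m i.succ ∣ m i.castSucc) (i : Fin (n + 1)) : m i ∣ m 0 := by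
  induction i using Fin.induction with
  | zero => rfl
  | succ i ih => exact (hdvd i).trans ih

namespace Matrix

section Transvection

variable {ι : Type*} [Fintype ι] [DecidableEq ι]

theorem vecMul_transvection {R : Type*} [CommRing R] (v : ι → R) (i j : ι) (c : R) :
    v ᵥ* transvection i j c = update v j (v j + v i * c) := by
  ext l
  rw [transvection, vecMul_add, vecMul_one, Pi.add_apply, update_apply]
  split_ifs with h
  · subst h
    simp [vecMul, dotProduct, single_apply]
  · simp [vecMul, dotProduct, Ne.symm h]

theorem vecMul_transvection_rotate {R : Type*} [CommRing R] (v : ι → R) {i j : ι}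
    (hij : i ≠ j) :
    v ᵥ* (transvection i j 1 * transvection j i (-1) * transvection i j 1) =
      update (update v i (-v j)) j (v i) := by
  simp only [← vecMul_vecMul, vecMul_transvection]
  ext l
  rcases eq_or_ne l j with rfl | hlj
  · simp [hij, Ne.symm hij]
  rcases eq_or_ne l i with rfl | hli
  · simp [hlj]
  · simp [hli, hlj]

theorem exists_isUnit_det_vecMul_eq_update_zero (v : ι → ℤ) {i j : ι} (hij : i ≠ j) :
    ∃ U : Matrix ι ι ℤ, IsUnit U.det ∧ ∃ g, v ᵥ* U = update (update v i g) j 0 := by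
  induction hv : (v j).natAbs using Nat.strong_induction_on generalizing v with
  | _ k ih =>
  by_cases hvj : v j = 0
  · exact ⟨1, by simp, v i, by simp [← hvj]⟩
  -- divide `v i` by `v j`, then rotate `(x, y) ↦ (-y, x)` to bring the remainder to `j`
  set T := transvection j i (-(v i / v j)) *
    (transvection i j 1 * transvection j i (-1) * transvection i j 1)
  have hT : v ᵥ* T = update (update v i (-v j)) j (v i % v j) := by
    rw [← vecMul_vecMul, vecMul_transvection_rotate _ hij, vecMul_transvection]
    simp [Ne.symm hij, Int.emod_def, sub_eq_add_neg]
  have hlt : (v i % v j).natAbs < k := by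
    have := Int.emod_lt (v i) hvj
    have := Int.emod_nonneg (v i) hvj
    omega
  obtain ⟨U, hU, g, hvU⟩ := ih _ hlt (v ᵥ* T) (by rw [hT, update_self])
  refine ⟨T * U, ?_, g, ?_⟩
  · rw [det_mul]
    refine IsUnit.mul ?_ hU
    simp [T, det_mul, det_transvection_of_ne _ _ hij, det_transvection_of_ne _ _ (Ne.symm hij)]
  · rw [← vecMul_vecMul, hvU, hT]
    simp [update_comm hij, update_idem]

theorem exists_isUnit_det_vecMul_eq_single (v : ι → ℤ) (i : ι) :
    ∃ U : Matrix ι ι ℤ, IsUnit U.det ∧ ∃ g, v ᵥ* U = Pi.single i g := by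
  suffices h : ∀ s : Finset ι, ∃ U : Matrix ι ι ℤ, IsUnit U.det ∧
      ∀ j ∈ s, j ≠ i → (v ᵥ* U) j = 0 by
    obtain ⟨U, hU, hzero⟩ := h Finset.univ
    refine ⟨U, hU, (v ᵥ* U) i, funext fun j => ?_⟩
    by_cases hj : j = i
    · subst hj
      simp
    · simp [hj, hzero j (Finset.mem_univ j) hj]
  intro s
  induction s using Finset.induction_on with
  | empty => exact ⟨1, by simp, by simp⟩
  | insert j s _ ih =>
    obtain ⟨U, hU, hzero⟩ := ih
    by_cases hji : j = i
    · exact ⟨U, hU, fun l hl hli => hzero l ((Finset.mem_insert.1 hl).resolve_left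
        (by rintro rfl; exact hli hji)) hli⟩
    obtain ⟨V, hV, g, hUV⟩ := exists_isUnit_det_vecMul_eq_update_zero (v ᵥ* U) (Ne.symm hji)
    refine ⟨U * V, by rw [det_mul]; exact hU.mul hV, fun l hl hli => ?_⟩
    rw [← vecMul_vecMul, hUV]
    rcases Finset.mem_insert.1 hl with rfl | hl
    · simp
    · simp [update_apply, hli, hzero l hl hli]

theorem exists_isUnit_det_single_vecMul_modEq_single_one [Nontrivial ι] {g u N : ℤ}
    (hgu : g * u ≡ 1 [ZMOD N]) (i : ι) :
    ∃ U : Matrix ι ι ℤ, IsUnit U.det ∧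
      ∀ l, (Pi.single i g ᵥ* U) l ≡ (Pi.single i 1 : ι → ℤ) l [ZMOD N] := by
  obtain ⟨j, hji⟩ := exists_ne i
  -- at `(i, j)`: `(g, 0) ↦ (g, gu) ↦ (g + gu(1 - g), gu) ↦ (g + gu(1 - g), g(gu - 1))`
  refine ⟨transvection i j u * transvection j i (1 - g) * transvection i j (-1), ?_,
    fun l => ?_⟩
  · simp [det_mul, det_transvection_of_ne _ _ hji, det_transvection_of_ne _ _ (Ne.symm hji)]
  obtain ⟨t, ht⟩ := Int.modEq_iff_dvd.1 hgu
  simp only [← vecMul_vecMul, vecMul_transvection]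
  rcases eq_or_ne l j with rfl | hlj
  · have : g * u - (g + g * u * (1 - g)) ≡ 0 [ZMOD N] :=
      Int.modEq_zero_iff_dvd.2 ⟨-(g * t), by linear_combination -g * ht⟩
    simpa [Ne.symm hji, hji, sub_eq_add_neg] using this
  rcases eq_or_ne l i with rfl | hli
  · have : g + g * u * (1 - g) ≡ 1 [ZMOD N] :=
      (Int.modEq_iff_dvd.2 ⟨(g - 1) * t, by linear_combination (g - 1) * ht⟩).symm
    simpa [Ne.symm hji, hji] using this
  · simp [hli, hlj]

theorem exists_isUnit_det_vecMul_modEq_single [Nontrivial ι] {v c : ι → ℤ} {N : ℤ}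
    (h : v ⬝ᵥ c ≡ 1 [ZMOD N]) (i : ι) :
    ∃ U : Matrix ι ι ℤ, IsUnit U.det ∧
      ∀ l, (v ᵥ* U) l ≡ (Pi.single i 1 : ι → ℤ) l [ZMOD N] := by
  obtain ⟨U, hU, g, hvU⟩ := exists_isUnit_det_vecMul_eq_single v i
  have hgu : g * (U⁻¹ *ᵥ c) i ≡ 1 [ZMOD N] := by
    rwa [← single_dotProduct, ← hvU, ← dotProduct_mulVec, mulVec_mulVec, mul_nonsing_inv _ hU,
      one_mulVec]
  obtain ⟨V, hV, hgV⟩ := exists_isUnit_det_single_vecMul_modEq_single_one hgu i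
  exact ⟨U * V, by rw [det_mul]; exact hU.mul hV, by rwa [← vecMul_vecMul, hvU]⟩

end Transvection

section RowModEq

variable {ι κ : Type*} {m : ι → ℤ}

/-- Congruence modulo the right ideal `diag(m) · Mat(ℤ)`: row `i` is taken modulo `m i`. -/
def RowModEq (m : ι → ℤ) (A B : Matrix ι κ ℤ) : Prop :=
  ∀ i j, A i j ≡ B i j [ZMOD m i]

namespace RowModEq

protected theorem symm {A B : Matrix ι κ ℤ} (h : RowModEq m A B) : RowModEq m B A :=
  fun i j => (h i j).symm

protected theorem trans {A B C : Matrix ι κ ℤ} (hAB : RowModEq m A B) (hBC : RowModEq m B C) :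
    RowModEq m A C :=
  fun i j => (hAB i j).trans (hBC i j)

instance : @Trans (Matrix ι κ ℤ) _ _ (RowModEq m) (RowModEq m) (RowModEq m) :=
  ⟨RowModEq.trans⟩

theorem mul_right [Fintype κ] {o : Type*} {A B : Matrix ι κ ℤ} (h : RowModEq m A B)
    (C : Matrix κ o ℤ) : RowModEq m (A * C) (B * C) :=
  fun i _ => Int.ModEq.sum fun l _ => (h i l).mul_right _

end RowModEq

theorem rowModEq_iff_exists_sub_eq_diagonal_mul [Fintype ι] [DecidableEq ι]
    {A B : Matrix ι ι ℤ} : RowModEq m A B ↔ ∃ X, A - B = diagonal m * X := by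
  constructor
  · intro h
    refine ⟨of fun i j => (A i j - B i j) / m i, ext fun i j => ?_⟩
    rw [diagonal_mul, of_apply, sub_apply, Int.mul_ediv_cancel' (Int.modEq_iff_dvd.1 (h i j).symm)]
  · rintro ⟨X, hX⟩ i j
    refine (Int.modEq_iff_dvd.2 ⟨X i j, ?_⟩).symm
    rw [← diagonal_mul, ← hX, sub_apply]

end RowModEq

section BlockOne

variable {R : Type*} {k : ℕ}

/-- The block matrix `[[1, 0], [c, N]]`. -/
def blockOne [Zero R] [One R] (c : Fin k → R) (N : Matrix (Fin k) (Fin k) R) :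
    Matrix (Fin (k + 1)) (Fin (k + 1)) R :=
  of (Fin.cons (Pi.single 0 1) fun i => Fin.cons (c i) (N i))

section Entries

variable [Zero R] [One R] (c : Fin k → R) (N : Matrix (Fin k) (Fin k) R)

@[simp] theorem blockOne_zero_zero : blockOne c N 0 0 = 1 := by simp [blockOne]

@[simp] theorem blockOne_zero_succ (j : Fin k) : blockOne c N 0 j.succ = 0 := by simp [blockOne]

@[simp] theorem blockOne_succ_zero (i : Fin k) : blockOne c N i.succ 0 = c i := by simp [blockOne]

@[simp] theorem blockOne_succ_succ (i j : Fin k) : blockOne c N i.succ j.succ = N i j := by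
  simp [blockOne]

@[simp] theorem blockOne_submatrix_succ_succ :
    (blockOne c N).submatrix Fin.succ Fin.succ = N := by
  ext
  simp

end Entries

theorem det_blockOne [CommRing R] (c : Fin k → R) (N : Matrix (Fin k) (Fin k) R) :
    (blockOne c N).det = N.det := by
  simp [det_succ_row_zero, Fin.sum_univ_succ]

variable [Semiring R]

theorem mul_blockOne_apply_zero {ι : Type*} (A : Matrix ι (Fin (k + 1)) R) (c : Fin k → R)
    (N : Matrix (Fin k) (Fin k) R) (i : ι) :
    (A * blockOne c N) i 0 = A i 0 + ∑ l, A i l.succ * c l := by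
  simp [mul_apply, Fin.sum_univ_succ]

theorem mul_blockOne_apply_succ {ι : Type*} (A : Matrix ι (Fin (k + 1)) R) (c : Fin k → R)
    (N : Matrix (Fin k) (Fin k) R) (i : ι) (j : Fin k) :
    (A * blockOne c N) i j.succ = ∑ l, A i l.succ * N l j := by
  simp [mul_apply, Fin.sum_univ_succ]

theorem blockOne_zero_mul_blockOne_zero (X Y : Matrix (Fin k) (Fin k) R) :
    blockOne 0 X * blockOne 0 Y = blockOne 0 (X * Y) := by
  ext i j
  cases j using Fin.cases <;>
    simp only [mul_blockOne_apply_zero, mul_blockOne_apply_succ] <;>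
    cases i using Fin.cases <;> simp [mul_apply]

theorem blockOne_zero_diagonal (d : Fin k → R) :
    blockOne 0 (diagonal d) = diagonal (Fin.cons 1 d) := by
  ext i j
  cases i using Fin.cases <;> cases j using Fin.cases <;>
    simp [diagonal_apply, eq_comm]

theorem RowModEq.blockOne_congr {m : Fin (k + 1) → ℤ} (c : Fin k → ℤ)
    {X Y : Matrix (Fin k) (Fin k) ℤ} (h : RowModEq (Fin.tail m) X Y) :
    RowModEq m (blockOne c X) (blockOne c Y) := by
  have h' : ∀ i j, X i j ≡ Y i j [ZMOD m i.succ] := h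
  intro i j
  cases i using Fin.cases <;> cases j using Fin.cases <;> simp [h']

theorem RowModEq.of_blockOne_zero_mul {m : Fin (k + 1) → ℤ} {X : Matrix (Fin k) (Fin k) ℤ}
    {B : Matrix (Fin (k + 1)) (Fin (k + 1)) ℤ} (h : RowModEq m (blockOne 0 X * B) 1) :
    RowModEq (Fin.tail m) (X * B.submatrix Fin.succ Fin.succ) 1 := by
  intro i j
  simpa [mul_apply, Fin.sum_univ_succ, one_apply, Fin.tail] using h i.succ j.succ

end BlockOne

section Reduction

variable {k : ℕ} {m : Fin (k + 1) → ℤ}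

theorem exists_isUnit_det_mul_rowModEq_blockOne_of_row_zero (hm : ∀ i, m i ∣ m 0)
    {A B : Matrix (Fin (k + 1)) (Fin (k + 1)) ℤ} (hAB : RowModEq m (A * B) 1)
    (hA : ∀ j, A 0 j ≡ (Pi.single 0 1 : Fin (k + 1) → ℤ) j [ZMOD m 0]) :
    ∃ P : Matrix (Fin (k + 1)) (Fin (k + 1)) ℤ, IsUnit P.det ∧
      RowModEq m (A * P) (blockOne 0 (A.submatrix Fin.succ Fin.succ)) := by
  have hB : B 0 0 ≡ 1 [ZMOD m 0] := calc
    B 0 0 = ∑ l, (Pi.single 0 1 : Fin (k + 1) → ℤ) l * B l 0 := by simp [Pi.single_apply]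
    _ ≡ (A * B) 0 0 [ZMOD m 0] := Int.ModEq.sum fun l _ => ((hA l).mul_right _).symm
    _ ≡ 1 [ZMOD m 0] := hAB 0 0
  refine ⟨blockOne (fun l => B l.succ 0) 1, by simp [det_blockOne], fun i j => ?_⟩
  cases j using Fin.cases with
  | zero =>
    calc (A * blockOne (fun l => B l.succ 0) 1) i 0 = (A * B) i 0 + A i 0 * (1 - B 0 0) := by
          rw [mul_blockOne_apply_zero, mul_apply, Fin.sum_univ_succ]
          ring
      _ ≡ (1 : Matrix _ _ ℤ) i 0 + A i 0 * (1 - 1) [ZMOD m i] :=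
          (hAB i 0).add (((hB.of_dvd (hm i)).sub_left 1).mul_left _)
      _ = blockOne 0 (A.submatrix Fin.succ Fin.succ) i 0 := by
          cases i using Fin.cases <;> simp
  | succ j =>
    rw [mul_blockOne_apply_succ]
    cases i using Fin.cases with
    | zero => simpa [one_apply] using hA j.succ
    | succ i => simp [one_apply]

theorem exists_isUnit_det_mul_rowModEq_blockOne [Nontrivial (Fin (k + 1))]
    (hm : ∀ i, m i ∣ m 0) {A B : Matrix (Fin (k + 1)) (Fin (k + 1)) ℤ}
    (hAB : RowModEq m (A * B) 1) :
    ∃ (P : Matrix (Fin (k + 1)) (Fin (k + 1)) ℤ) (A₂ B₂ : Matrix (Fin k) (Fin k) ℤ),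
      IsUnit P.det ∧ RowModEq m (A * P) (blockOne 0 A₂) ∧
        RowModEq (Fin.tail m) (A₂ * B₂) 1 := by
  have hrow : A 0 ⬝ᵥ (fun j => B j 0) ≡ 1 [ZMOD m 0] := by
    simpa [mul_apply, dotProduct] using hAB 0 0
  obtain ⟨P₁, hP₁, hAP₁⟩ := exists_isUnit_det_vecMul_modEq_single hrow 0
  have hAB₁ : RowModEq m (A * P₁ * (P₁⁻¹ * B)) 1 := by
    rwa [Matrix.mul_assoc, mul_nonsing_inv_cancel_left _ _ hP₁]
  obtain ⟨P₂, hP₂, hblock⟩ := exists_isUnit_det_mul_rowModEq_blockOne_of_row_zero hm hAB₁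
    (by simpa [mul_apply_eq_vecMul] using hAP₁)
  refine ⟨P₁ * P₂, _, _, by rw [det_mul]; exact hP₁.mul hP₂,
    by rwa [← Matrix.mul_assoc],
    RowModEq.of_blockOne_zero_mul (B := P₂⁻¹ * (P₁⁻¹ * B)) ?_⟩
  refine (hblock.mul_right _).symm.trans ?_
  rwa [Matrix.mul_assoc, mul_nonsing_inv_cancel_left _ _ hP₂]

end Reduction

end Matrix

open Matrix

theorem exists_isUnit_det_mul_rowModEq_diagonal (n : ℕ) {m : Fin (n + 1) → ℤ}
    (hm : 0 < m (Fin.last n)) (hdvd : ∀ i : Fin n, m i.succ ∣ m i.castSucc)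
    {A B : Matrix (Fin (n + 1)) (Fin (n + 1)) ℤ} (hAB : RowModEq m (A * B) 1) :
    ∃ (P : Matrix (Fin (n + 1)) (Fin (n + 1)) ℤ) (p : ℤ), IsUnit P.det ∧
      (0 ≤ p ∧ p ≤ m (Fin.last n) / 2 ∧ p.gcd (m (Fin.last n)) = 1) ∧
      RowModEq m (A * P) (diagonal fun i => if i = Fin.last n then p else 1) := by
  induction n with
  | zero =>
    obtain ⟨ε, p, hε, hap, hp⟩ :=
      Int.exists_sign_mul_modEq_le_half_gcd_eq_one hm (by simpa [mul_apply] using hAB 0 0)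
    refine ⟨diagonal fun _ => ε, p, IsUnit.of_mul_eq_one ε (by simpa using hε), hp, ?_⟩
    intro i j
    fin_cases i; fin_cases j
    simpa using hap
  | succ n ih =>
    obtain ⟨P, A₂, B₂, hP, hAP, hA₂⟩ :=
      exists_isUnit_det_mul_rowModEq_blockOne (Fin.dvd_apply_zero_of_succ_dvd_castSucc hdvd) hAB
    obtain ⟨P₂, p, hP₂, hp, hA₂P₂⟩ :=
      ih (m := Fin.tail m) hm (fun i => by simpa [Fin.tail] using hdvd i.succ) hA₂
    refine ⟨P * blockOne 0 P₂, p, by rw [det_mul, det_blockOne]; exact hP.mul hP₂, hp, ?_⟩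
    calc A * (P * blockOne 0 P₂) = A * P * blockOne 0 P₂ := (Matrix.mul_assoc _ _ _).symm
      RowModEq m _ (blockOne 0 A₂ * blockOne 0 P₂) := hAP.mul_right _
      _ = blockOne 0 (A₂ * P₂) := blockOne_zero_mul_blockOne_zero _ _
      RowModEq m _ (blockOne 0 (diagonal fun i => if i = Fin.last n then p else 1)) :=
          hA₂P₂.blockOne_congr 0
      _ = diagonal fun i => if i = Fin.last (n + 1) then p else 1 := by
          rw [blockOne_zero_diagonal]
          congr 1
          funext i
          cases i using Fin.cases with
          | zero => simp [Fin.ext_iff]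
          | succ i => simp [← Fin.succ_last]

/-- Lemma on integral matrices: if `A * B ≡ 1` modulo the right ideal `𝓜` generated by
`diag(m₁, …, mₙ)` (where `mᵢ₊₁ ∣ mᵢ`), then `A` can be right-multiplied by an invertible
integral matrix `P` so that `A * P ≡ diag(1, …, 1, p)` mod `𝓜`, with
`0 ≤ p ≤ ⌊mₙ/2⌋` and `gcd(p, mₙ) = 1` (so `p = 0` if `mₙ = 1`). -/
theorem stmt0 (n : ℕ) (m : Fin (n + 1) → ℤ) (hm : ∀ i, 0 < m i)
    (hdvd : ∀ i : Fin n, m i.succ ∣ m i.castSucc)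
    (A B : Matrix (Fin (n + 1)) (Fin (n + 1)) ℤ)
    (hAB : ∃ X : Matrix (Fin (n + 1)) (Fin (n + 1)) ℤ,
      A * B - 1 = Matrix.diagonal m * X) :
    ∃ (P : Matrix (Fin (n + 1)) (Fin (n + 1)) ℤ) (p : ℤ),
      IsUnit P.det ∧ 0 ≤ p ∧ p ≤ m (Fin.last n) / 2 ∧
      Int.gcd p (m (Fin.last n)) = 1 ∧ (m (Fin.last n) = 1 → p = 0) ∧
      ∃ X : Matrix (Fin (n + 1)) (Fin (n + 1)) ℤ,
        A * P - Matrix.diagonal (fun i => if i = Fin.last n then p else 1) =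
          Matrix.diagonal m * X := by
  obtain ⟨P, p, hP, ⟨hp₀, hp, hgcd⟩, hAP⟩ :=
    exists_isUnit_det_mul_rowModEq_diagonal n (hm _) hdvd
      (rowModEq_iff_exists_sub_eq_diagonal_mul.2 hAB)
  refine ⟨P, p, hP, hp₀, hp, hgcd, fun h => by omega,
    rowModEq_iff_exists_sub_eq_diagonal_mul.1 hAP⟩
end

section
/- Let m₁,…,mₙ be positive integers with m_{i+1} dividing m_i, and let 𝓜 be the right ideal of Matₙ(ℤ) generated by diag(m₁,…,mₙ). If A ∈ Matₙ(ℤ), P₁, P₂ ∈ GLₙ(ℤ), and AP₁ ≡ diag(1,…,1,p₁) (mod 𝓜), AP₂ ≡ diag(1,…,1,p₂) (mod 𝓜) with 0 ≤ p₁, p₂ ≤ ⌊mₙ/2⌋, then p₁ = p₂. -/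
/-! Since `mₙ` divides every `mᵢ`, reducing `A * P ≡ diag(1, …, 1, p)` modulo `mₙ` gives
`det A * det P ≡ p`, and `det P = ±1`; hence `p₁ ≡ ±p₂ (mod mₙ)`, which for
`0 ≤ p₁, p₂ ≤ ⌊mₙ/2⌋` forces `p₁ = p₂`. -/

open Matrix

theorem eq_of_dvd_sub_or_dvd_add_of_le_half {M a b : ℤ} (ha : 0 ≤ a) (haM : a ≤ M / 2)
    (hb : 0 ≤ b) (hbM : b ≤ M / 2) (h : M ∣ a - b ∨ M ∣ a + b) : a = b := by
  rcases h with h | h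
  · obtain hM | hM := le_or_gt M 0
    · omega
    · have := Int.eq_zero_of_abs_lt_dvd h (abs_lt.mpr ⟨by omega, by omega⟩)
      omega
  · by_cases hlt : a + b < M
    · have := Int.eq_zero_of_dvd_of_nonneg_of_lt (by omega) hlt h
      omega
    · omega

theorem dvd_sub_or_dvd_add_of_dvd_mul_sub_mul {M a b u v : ℤ} (hu : IsUnit u) (hv : IsUnit v)
    (h : M ∣ a * u - b * v) : M ∣ a - b ∨ M ∣ a + b := by
  rcases Int.isUnit_iff.mp hu with rfl | rfl <;> rcases Int.isUnit_iff.mp hv with rfl | rfl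
  · exact .inl (by simpa using h)
  · exact .inr (by simpa using h)
  · exact .inr (dvd_neg.mp (by rwa [show -(a + b) = a * -1 - b * 1 by ring]))
  · exact .inl (dvd_neg.mp (by rwa [show -(a - b) = a * -1 - b * -1 by ring]))

theorem last_dvd_of_succ_dvd_castSucc {α : Type*} [Monoid α] {n : ℕ} {m : Fin (n + 1) → α}
    (hdvd : ∀ i : Fin n, m i.succ ∣ m i.castSucc) (i : Fin (n + 1)) : m (Fin.last n) ∣ m i := by
  induction i using Fin.reverseInduction with
  | last => exact dvd_rfl
  | cast i ih => exact ih.trans (hdvd i)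

theorem Matrix.det_diagonal_ite_one {R ι : Type*} [CommRing R] [Fintype ι] [DecidableEq ι]
    (j : ι) (p : R) : (diagonal fun i => if i = j then p else 1).det = p := by
  simp [det_diagonal, Finset.prod_ite_eq']

theorem RingHom.map_det_eq_of_sub_eq_diagonal_mul {R S ι : Type*} [CommRing R] [CommRing S]
    [Fintype ι] [DecidableEq ι] (f : R →+* S) {d : ι → R} (hd : ∀ i, f (d i) = 0)
    {B D X : Matrix ι ι R} (h : B - D = diagonal d * X) : f B.det = f D.det := by
  have hdiag : f.mapMatrix (diagonal d) = 0 := by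
    rw [f.mapMatrix_apply, diagonal_map f.map_zero]
    simp [hd]
  have hBD := congrArg f.mapMatrix h
  rw [map_sub, map_mul, hdiag, zero_mul, sub_eq_zero] at hBD
  rw [f.map_det, hBD, ← f.map_det]

theorem stmt1_general (n : ℕ) (m : Fin (n + 1) → ℤ)
    (hdvd : ∀ i : Fin n, m i.succ ∣ m i.castSucc)
    (A P₁ P₂ : Matrix (Fin (n + 1)) (Fin (n + 1)) ℤ)
    (hP₁ : IsUnit P₁.det) (hP₂ : IsUnit P₂.det)
    (p₁ p₂ : ℤ) (hp₁0 : 0 ≤ p₁) (hp₁ : p₁ ≤ m (Fin.last n) / 2)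
    (hp₂0 : 0 ≤ p₂) (hp₂ : p₂ ≤ m (Fin.last n) / 2)
    (h₁ : ∃ X : Matrix (Fin (n + 1)) (Fin (n + 1)) ℤ,
      A * P₁ - Matrix.diagonal (fun i => if i = Fin.last n then p₁ else 1) =
        Matrix.diagonal m * X)
    (h₂ : ∃ X : Matrix (Fin (n + 1)) (Fin (n + 1)) ℤ,
      A * P₂ - Matrix.diagonal (fun i => if i = Fin.last n then p₂ else 1) =
        Matrix.diagonal m * X) :
    p₁ = p₂ := by
  set f := Ideal.Quotient.mk (Ideal.span {m (Fin.last n)})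
  have hm : ∀ i, f (m i) = 0 := fun i =>
    (Ideal.Quotient.eq_zero_iff_dvd _ _).mpr (last_dvd_of_succ_dvd_castSucc hdvd i)
  have hdet : ∀ P p, (∃ X, A * P - diagonal (fun i => if i = Fin.last n then p else 1) =
      diagonal m * X) → f (A.det * P.det) = f p := by
    rintro P p ⟨X, hX⟩
    rw [← det_mul, f.map_det_eq_of_sub_eq_diagonal_mul hm hX, det_diagonal_ite_one]
  have hcong : m (Fin.last n) ∣ p₁ * P₂.det - p₂ * P₁.det := by
    rw [← Ideal.Quotient.eq_zero_iff_dvd, map_sub, map_mul, map_mul, ← hdet P₁ p₁ h₁,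
      ← hdet P₂ p₂ h₂, map_mul, map_mul, sub_eq_zero]
    ring
  exact eq_of_dvd_sub_or_dvd_add_of_le_half hp₁0 hp₁ hp₂0 hp₂
    (dvd_sub_or_dvd_add_of_dvd_mul_sub_mul hP₂ hP₁ hcong)

/-- Uniqueness of `p` in the normal form `A * P ≡ diag(1, …, 1, p)` modulo the right ideal
generated by `diag(m₁, …, mₙ)`: `p` is determined by the class of `A` mod the ideal. -/
theorem stmt1 (n : ℕ) (m : Fin (n + 1) → ℤ) (hm : ∀ i, 0 < m i)
    (hdvd : ∀ i : Fin n, m i.succ ∣ m i.castSucc)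
    (A P₁ P₂ : Matrix (Fin (n + 1)) (Fin (n + 1)) ℤ)
    (hP₁ : IsUnit P₁.det) (hP₂ : IsUnit P₂.det)
    (p₁ p₂ : ℤ) (hp₁0 : 0 ≤ p₁) (hp₁ : p₁ ≤ m (Fin.last n) / 2)
    (hp₂0 : 0 ≤ p₂) (hp₂ : p₂ ≤ m (Fin.last n) / 2)
    (h₁ : ∃ X : Matrix (Fin (n + 1)) (Fin (n + 1)) ℤ,
      A * P₁ - Matrix.diagonal (fun i => if i = Fin.last n then p₁ else 1) =
        Matrix.diagonal m * X)
    (h₂ : ∃ X : Matrix (Fin (n + 1)) (Fin (n + 1)) ℤ,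
      A * P₂ - Matrix.diagonal (fun i => if i = Fin.last n then p₂ else 1) =
        Matrix.diagonal m * X) :
    p₁ = p₂ :=
  stmt1_general n m hdvd A P₁ P₂ hP₁ hP₂ p₁ p₂ hp₁0 hp₁ hp₂0 hp₂ h₁ h₂
end

section
/- Let G be a finite abelian group with minimal number of generators r ≤ n. Then every orbit of the right GLₙ(ℤ)-action on the set of generating n-tuples of G contains a tuple (σ₁,…,σₙ) with |G| = |σ₁| ⋯ |σₙ| (product of the orders of the entries). -/
/-!
A generating tuple `σ` of `G` is a surjection `f : ℤⁿ → G`, and acting by `P ∈ GLₙ(ℤ)` replaces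
the standard basis of `ℤⁿ` by the columns of `P`. Since `G` is finite, `ker f` has full rank, so
the Smith normal form gives a basis `b'` of `ℤⁿ` and nonzero `a₁, …, aₙ` with
`ker f = ⨁ aᵢ ℤ b'ᵢ`. Then `f (b'ᵢ)` has order `|aᵢ|`, while `G ≅ ℤⁿ ⧸ ker f ≅ ∏ ℤ ⧸ aᵢ ℤ` has
order `∏ |aᵢ|`.
-/

open Module Submodule

section SmithNormalForm

variable {ι R M : Type*} [Fintype ι] [CommRing R] [AddCommGroup M] [Module R M]
  {N : Submodule R M} {b : Basis ι R M} {bN : Basis ι R N} {a : ι → R}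

theorem Submodule.mem_iff_forall_dvd_repr_of_smith (hab : ∀ i, (bN i : M) = a i • b i)
    (x : M) : x ∈ N ↔ ∀ i, a i ∣ b.repr x i := by
  have repr_sum : ∀ (c : ι → R) (i), b.repr (∑ j, c j • a j • b j) i = a i * c i := by
    intro c i
    simp only [← mul_smul, b.repr_sum_self, mul_comm]
  simp_rw [bN.mem_submodule_iff', hab]
  constructor
  · rintro ⟨c, rfl⟩ i
    exact ⟨c i, repr_sum c i⟩
  · intro ha
    choose c hc using ha
    exact ⟨c, b.ext_elem fun i => (hc i).trans (repr_sum c i).symm⟩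

theorem Submodule.smul_mem_iff_dvd_of_smith (hab : ∀ i, (bN i : M) = a i • b i) (k : R)
    (j : ι) : k • b j ∈ N ↔ a j ∣ k := by
  classical
  rw [mem_iff_forall_dvd_repr_of_smith hab]
  refine ⟨fun h => by simpa using h j, fun h i => ?_⟩
  rcases eq_or_ne i j with rfl | hij
  · simpa using h
  · simp [hij.symm]

end SmithNormalForm

theorem addOrderOf_eq_natAbs_of_zsmul_eq_zero_iff {A : Type*} [AddGroup A] {x : A} {c : ℤ}
    (h : ∀ k : ℤ, k • x = 0 ↔ c ∣ k) : addOrderOf x = c.natAbs :=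
  (Int.natAbs_eq_of_dvd_dvd (addOrderOf_dvd_iff_zsmul_eq_zero.mpr ((h c).mpr dvd_rfl))
    ((h _).mp (addOrderOf_dvd_iff_zsmul_eq_zero.mp dvd_rfl))).trans (by simp)

theorem exists_basis_prod_addOrderOf_eq_card {ι M A : Type*} [Fintype ι] [AddCommGroup M]
    [AddCommGroup A] [Finite A] (b : Basis ι ℤ M) (f : M →ₗ[ℤ] A)
    (hf : Function.Surjective f) :
    ∃ b' : Basis ι ℤ M, ∏ i, addOrderOf (f (b' i)) = Nat.card A := by
  have := Module.Free.of_basis b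
  have := Module.Finite.of_basis b
  let e := f.quotKerEquivOfSurjective hf
  have := Finite.of_equiv _ e.toEquiv.symm
  have h := (finiteQuotient_iff (LinearMap.ker f)).mp this
  refine ⟨smithNormalFormTopBasis b h, ?_⟩
  have horder : ∀ i, addOrderOf (f (smithNormalFormTopBasis b h i)) =
      (smithNormalFormCoeffs b h i).natAbs := fun i =>
    addOrderOf_eq_natAbs_of_zsmul_eq_zero_iff fun k => by
      rw [← map_zsmul, ← LinearMap.mem_ker]
      exact smul_mem_iff_dvd_of_smith (smithNormalFormBotBasis_def b h) k i
  simp_rw [horder, Nat.card_congr e.toEquiv.symm,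
    Nat.card_congr (quotientEquivPiZMod _ b h).toEquiv, Nat.card_pi, Nat.card_zmod]

theorem linearCombination_ofMul_surjective_of_closure_eq_top {G ι : Type*} [CommGroup G]
    [Fintype ι] {σ : ι → G} (hσ : Subgroup.closure (Set.range σ) = ⊤) :
    Function.Surjective (Fintype.linearCombination ℤ (Additive.ofMul ∘ σ)) := by
  rw [← LinearMap.range_eq_top, Fintype.range_linearCombination, ← Submodule.toAddSubgroup_inj,
    Submodule.span_int_eq_addSubgroupClosure, Submodule.top_toAddSubgroup, Set.range_comp,
    Equiv.image_eq_preimage_symm, Additive.ofMul_symm_eq, ← Subgroup.toAddSubgroup_closure, hσ]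
  rfl

theorem stmt5_general {G : Type*} [CommGroup G] [Finite G] (n : ℕ) :
    ∀ σ : Fin n → G, Subgroup.closure (Set.range σ) = ⊤ →
      ∃ P : Matrix (Fin n) (Fin n) ℤ, IsUnit P.det ∧
        ∏ j, orderOf (∏ i, σ i ^ P i j) = Nat.card G := by
  intro σ hσ
  obtain ⟨b', hb'⟩ := exists_basis_prod_addOrderOf_eq_card (Pi.basisFun ℤ (Fin n)) _
    (linearCombination_ofMul_surjective_of_closure_eq_top hσ)
  refine ⟨(Pi.basisFun ℤ (Fin n)).toMatrix b', ?_, ?_⟩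
  · rw [← Basis.det_apply]
    exact Basis.isUnit_det _ _
  · rw [Nat.card_congr Additive.ofMul, ← hb']
    refine Finset.prod_congr rfl fun j _ => ?_
    rw [← addOrderOf_ofMul_eq_orderOf]
    simp [Fintype.linearCombination_apply, ofMul_prod, Basis.toMatrix_apply]

/-- If a finite abelian group `G` can be generated by `n` elements, then every orbit of the
right `GLₙ(ℤ)`-action on generating `n`-tuples contains a tuple `(σ₁, …, σₙ)` with
`|G| = |σ₁| ⋯ |σₙ|`. -/
theorem stmt5 {G : Type*} [CommGroup G] [Finite G] (n : ℕ)
    (hmg : ∃ τ : Fin n → G, Subgroup.closure (Set.range τ) = ⊤) :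
    ∀ σ : Fin n → G, Subgroup.closure (Set.range σ) = ⊤ →
      ∃ P : Matrix (Fin n) (Fin n) ℤ, IsUnit P.det ∧
        ∏ j, orderOf (∏ i, σ i ^ P i j) = Nat.card G :=
  stmt5_general n
end

section
/- Let σ₁,…,σₙ be commuting finite-order automorphisms of an algebra 𝒜 with σ_i^{m_i} = 1 over an algebraically closed field of characteristic 0. The ℤⁿ-support of the multiloop algebra M_m(𝒜,σ) generates ℤⁿ as a group if and only if |⟨σ₁,…,σₙ⟩| = m₁⋯mₙ. -/
/-!
The map `P : ℤⁿ → ⟨σ₁, …, σₙ⟩`, `μ ↦ ∏ σᵢ ^ μᵢ`, is onto and kills `m₁ℤ × ⋯ × mₙℤ`, so the group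
has order `m₁ ⋯ mₙ` iff `ker P ⊆ m₁ℤ × ⋯ × mₙℤ`. Since the `σᵢ` commute, have orders dividing
the `mᵢ` and `char k = 0`, the averaging operators `(1/mᵢ) ∑ₐ ζᵢ^(-ra) σᵢ^a` show that `𝒜` is
spanned by joint eigenvectors, on whose `λ`-eigenspace `P μ` acts by `⟨λ, μ⟩ = ∏ ζᵢ^(λᵢ μᵢ)`.
Hence `ker P` is the annihilator of the support `S` for this pairing, i.e. of the lattice `L`
generated by `S`. This lattice contains `m₁ℤ × ⋯ × mₙℤ`, and characters of the finite group
`ℤⁿ / L` separate points, so the annihilator of `L` is `m₁ℤ × ⋯ × mₙℤ` exactly when `L = ℤⁿ`.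
-/

open Finset

lemma Finset.sum_range_succ_eq_of_eq {M : Type*} [AddCommGroup M] {F : ℕ → M} {m : ℕ}
    (h : F m = F 0) : ∑ a ∈ range m, F (a + 1) = ∑ a ∈ range m, F a := by
  have := (sum_range_succ' F m).symm.trans (sum_range_succ F m)
  rwa [h, add_left_inj] at this

lemma geom_sum_eq_zero_of_pow_eq_one {k : Type*} [Field k] {x : k} {m : ℕ} (hx : x ^ m = 1)
    (hx1 : x ≠ 1) : ∑ r ∈ range m, x ^ r = 0 := by
  rw [geom_sum_eq hx1, hx, sub_self, zero_div]

section RootProj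

variable {k A : Type*} [Field k] [Ring A] [Algebra k A]

/-- When `g ^ m = 1`, this is the projection onto the `ζ ^ r`-eigenspace of `g`. -/
noncomputable def rootProj (g : A) (ζ : k) (m r : ℕ) : A :=
  (m : k)⁻¹ • ∑ a ∈ range m, (ζ ^ r)⁻¹ ^ a • g ^ a

lemma IsPrimitiveRoot.sum_rootProj {g : A} {ζ : k} {m : ℕ} (hζ : IsPrimitiveRoot ζ m)
    (hm : (m : k) ≠ 0) : ∑ r ∈ range m, rootProj g ζ m r = 1 := by
  have hm0 : 0 < m := Nat.pos_of_ne_zero fun h => hm (by simp [h])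
  have hsum (a : ℕ) (ha : a ∈ range m) :
      ∑ r ∈ range m, (ζ ^ r)⁻¹ ^ a = if a = 0 then (m : k) else 0 := by
    split_ifs with ha0
    · simp [ha0]
    have hswap (r : ℕ) : (ζ ^ r)⁻¹ ^ a = (ζ ^ a)⁻¹ ^ r := by
      rw [← inv_pow, ← inv_pow, ← pow_mul, ← pow_mul, mul_comm]
    simp_rw [hswap]
    refine geom_sum_eq_zero_of_pow_eq_one ?_ ?_
    · rw [inv_pow, ← pow_mul, mul_comm, pow_mul, hζ.pow_eq_one, one_pow, inv_one]
    · rw [Ne, inv_eq_one]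
      exact hζ.pow_ne_one_of_pos_of_lt ha0 (mem_range.mp ha)
  simp_rw [rootProj, ← smul_sum]
  rw [sum_comm]
  simp_rw [← sum_smul]
  rw [sum_congr rfl fun a ha => by rw [hsum a ha]]
  simp [ite_smul, hm, hm0]

lemma mul_rootProj {g : A} {ζ : k} {m : ℕ} (hg : g ^ m = 1) (hζ : ζ ^ m = 1) (hζ0 : ζ ≠ 0)
    (r : ℕ) : g * rootProj g ζ m r = ζ ^ r • rootProj g ζ m r := by
  set ξ := (ζ ^ r)⁻¹
  have hξ : ξ ^ m = 1 := by rw [inv_pow, ← pow_mul, mul_comm, pow_mul, hζ, one_pow, inv_one]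
  have hshift : ξ • (g * ∑ a ∈ range m, ξ ^ a • g ^ a) = ∑ a ∈ range m, ξ ^ a • g ^ a := by
    simp_rw [mul_sum, smul_sum, mul_smul_comm, smul_smul, ← pow_succ']
    exact sum_range_succ_eq_of_eq (F := fun a => ξ ^ a • g ^ a) (by simp [hξ, hg])
  have hT : g * ∑ a ∈ range m, ξ ^ a • g ^ a = ζ ^ r • ∑ a ∈ range m, ξ ^ a • g ^ a := by
    conv_rhs => rw [← hshift, smul_smul, mul_inv_cancel₀ (pow_ne_zero r hζ0), one_smul]
  rw [rootProj, mul_smul_comm, hT, smul_comm]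

end RootProj

open scoped IsMulCommutative in
theorem Module.End.iSup_iInf_eigenspace_eq_top_of_pow_eq_one {k V ι : Type*} [Field k]
    [AddCommGroup V] [Module k V] [Fintype ι] {f : ι → Module.End k V}
    (hf : Pairwise fun i j => Commute (f i) (f j)) {m : ι → ℕ} (hfm : ∀ i, f i ^ m i = 1)
    {ζ : ι → k} (hζ : ∀ i, IsPrimitiveRoot (ζ i) (m i)) (hm : ∀ i, (m i : k) ≠ 0) :
    ⨆ r : ι → ℕ, ⨅ i, (f i).eigenspace (ζ i ^ r i) = ⊤ := by
  classical
  -- Inside the commutative algebra generated by the `f i`, `1 = ∏ᵢ ∑ᵣ rootProj (f i) (ζ i) (m i) r`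
  -- expands into a sum of joint eigenprojections `P r`.
  have := Algebra.isMulCommutative_adjoin k (s := Set.range f) <| by
    rintro _ ⟨i, rfl⟩ _ ⟨j, rfl⟩
    rcases eq_or_ne i j with rfl | hij
    exacts [rfl, hf hij]
  let g (i : ι) : Algebra.adjoin k (Set.range f) := ⟨f i, Algebra.subset_adjoin ⟨i, rfl⟩⟩
  let P (r : ι → ℕ) := ∏ i, rootProj (g i) (ζ i) (m i) (r i)
  have hP : ∑ r ∈ Fintype.piFinset fun i => range (m i), P r = 1 := by
    rw [← prod_univ_sum]
    exact prod_eq_one fun i _ => (hζ i).sum_rootProj (hm i)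
  have hgP (j : ι) (r : ι → ℕ) : g j * P r = ζ j ^ r j • P r := by
    have hgm : g j ^ m j = 1 := Subtype.ext (by simpa using hfm j)
    have hζ0 : ζ j ≠ 0 := (hζ j).ne_zero fun h => hm j (by simp [h])
    simp only [P]
    rw [← mul_prod_erase univ _ (mem_univ j), ← mul_assoc,
      mul_rootProj hgm (hζ j).pow_eq_one hζ0, smul_mul_assoc]
  refine eq_top_iff.mpr fun v _ => ?_
  have hv : v = ∑ r ∈ Fintype.piFinset fun i => range (m i), (P r : Module.End k V) v := by
    rw [← LinearMap.sum_apply, ← AddSubmonoidClass.coe_finsetSum, hP]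
    rfl
  rw [hv]
  refine sum_mem fun r _ => Submodule.mem_iSup_of_mem r (Submodule.mem_iInf _ |>.mpr fun j => ?_)
  rw [Module.End.mem_eigenspace_iff]
  simpa using congrArg (fun x : Algebra.adjoin k (Set.range f) => (x : Module.End k V) v) (hgP j r)

lemma LinearEquiv.iSup_iInf_eigenspace_eq_top_of_pow_eq_one {k V ι : Type*} [Field k]
    [AddCommGroup V] [Module k V] [Fintype ι] {σ : ι → V ≃ₗ[k] V}
    (hσ : Pairwise fun i j => Commute (σ i) (σ j)) {m : ι → ℕ} (hσm : ∀ i, σ i ^ m i = 1)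
    {ζ : ι → k} (hζ : ∀ i, IsPrimitiveRoot (ζ i) (m i)) (hm : ∀ i, (m i : k) ≠ 0) :
    ⨆ r : ι → ℕ, ⨅ i, Module.End.eigenspace (σ i : Module.End k V) (ζ i ^ r i) = ⊤ :=
  Module.End.iSup_iInf_eigenspace_eq_top_of_pow_eq_one
    (hσ.mono fun _ _ h => congrArg LinearEquiv.toLinearMap h)
    (fun i => by
      rw [← LinearEquiv.automorphismGroup.toLinearMapMonoidHom_apply, ← map_pow, hσm i, map_one])
    hζ hm

lemma LinearEquiv.zpow_apply_of_apply_eq_smul {k V : Type*} [Field k] [AddCommGroup V]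
    [Module k V] {g : V ≃ₗ[k] V} {c : k} (hc : c ≠ 0) {v : V} (h : g v = c • v) (a : ℤ) :
    (g ^ a) v = c ^ a • v := by
  induction a using Int.induction_on with
  | zero => simp
  | succ a ih =>
    rw [zpow_add_one, LinearEquiv.mul_apply, h, map_smul, ih, smul_smul, zpow_add_one₀ hc,
      mul_comm]
  | pred a ih =>
    have h' : g⁻¹ v = c⁻¹ • v := by
      change g.symm v = _
      rw [LinearEquiv.symm_apply_eq, map_smul, h, smul_smul, inv_mul_cancel₀ hc, one_smul]
    rw [zpow_sub_one, LinearEquiv.mul_apply, h', map_smul, ih, smul_smul, zpow_sub_one₀ hc,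
      mul_comm]

section ZPowProd

variable {G ι : Type*} [Group G] [Fintype ι] (σ : ι → G)
  (hσ : Pairwise fun i j => Commute (σ i) (σ j))

/-- `μ ↦ ∏ i, σ i ^ μ i`. -/
def zpowProd : (ι → ℤ) →+ Additive G :=
  AddMonoidHom.noncommPiCoprod (fun i => zmultiplesHom _ (Additive.ofMul (σ i)))
    (hσ.mono fun _ _ h x y => h.zpow_zpow x y)

lemma toMul_zpowProd_single [DecidableEq ι] (i : ι) (a : ℤ) :
    (zpowProd σ hσ (Pi.single i a)).toMul = σ i ^ a := by
  simp [zpowProd]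

lemma index_ker_zpowProd :
    (zpowProd σ hσ).ker.index = Nat.card (Subgroup.closure (Set.range σ)) := by
  have hrange :
      (zpowProd σ hσ).range = Subgroup.toAddSubgroup (Subgroup.closure (Set.range σ)) := by
    simp_rw [zpowProd, AddMonoidHom.noncommPiCoprod_range, AddSubgroup.range_zmultiplesHom,
      ← Set.iUnion_singleton_eq_range, Subgroup.closure_iUnion, ← Subgroup.zpowers_eq_closure,
      map_iSup]
    rfl
  rw [AddSubgroup.index_ker, hrange]
  rfl

lemma toMul_zpowProd_apply_eq_smul {k V : Type*} [Field k] [AddCommGroup V] [Module k V]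
    {σ : ι → V ≃ₗ[k] V} (hσ : Pairwise fun i j => Commute (σ i) (σ j)) {c : ι → k}
    (hc : ∀ i, c i ≠ 0) {v : V} (hv : ∀ i, σ i v = c i • v) (μ : ι → ℤ) :
    (zpowProd σ hσ μ).toMul v = (∏ i, c i ^ μ i) • v := by
  classical
  induction μ using Pi.single_induction with
  | zero => simp
  | add μ ν hμ hν =>
    rw [map_add, toMul_add, LinearEquiv.mul_apply, hν, map_smul, hμ, smul_smul,
      ← prod_mul_distrib]
    simp_rw [Pi.add_apply, add_comm (μ _), zpow_add₀ (hc _)]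
  | single i a =>
    rw [toMul_zpowProd_single, LinearEquiv.zpow_apply_of_apply_eq_smul (hc i) (hv i),
      Fintype.prod_eq_single i fun j hj => by rw [Pi.single_eq_of_ne hj, zpow_zero],
      Pi.single_eq_same]

end ZPowProd

lemma AddSubgroup.index_eq_iff_le_of_le {G : Type*} [AddGroup G] {H K : AddSubgroup G}
    (hHK : H ≤ K) (hH : H.index ≠ 0) : K.index = H.index ↔ K ≤ H := by
  refine ⟨fun h => ?_, fun h => by rw [le_antisymm h hHK]⟩
  have := AddSubgroup.relIndex_mul_index hHK
  rwa [h, Nat.mul_eq_right hH, AddSubgroup.relIndex_eq_one] at this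

section Lattice

variable {ι : Type*}

def multipleLattice (m : ι → ℕ) : AddSubgroup (ι → ℤ) :=
  AddSubgroup.pi Set.univ fun i => AddSubgroup.zmultiples (m i : ℤ)

lemma mem_multipleLattice {m : ι → ℕ} {μ : ι → ℤ} :
    μ ∈ multipleLattice m ↔ ∀ i, (m i : ℤ) ∣ μ i := by
  simp [multipleLattice, AddSubgroup.mem_pi, Int.mem_zmultiples_iff]

lemma index_multipleLattice [Fintype ι] (m : ι → ℕ) :
    (multipleLattice m).index = ∏ i, m i := by
  simp [multipleLattice, Int.index_zmultiples]

instance [Fintype ι] (m : ι → ℕ) [∀ i, NeZero (m i)] : (multipleLattice m).FiniteIndex :=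
  ⟨by simpa [index_multipleLattice, prod_ne_zero_iff] using fun i => NeZero.ne (m i)⟩

lemma multipleLattice_le [Finite ι] [DecidableEq ι] {m : ι → ℕ} {L : AddSubgroup (ι → ℤ)}
    (h : ∀ i, Pi.single i (m i : ℤ) ∈ L) : multipleLattice m ≤ L := by
  intro μ hμ
  refine AddSubgroup.pi_mem_of_single_mem μ fun i => ?_
  obtain ⟨t, ht⟩ := mem_multipleLattice.mp hμ i
  rw [ht, mul_comm, ← smul_eq_mul, Pi.single_smul]
  exact zsmul_mem (h i) t

end Lattice

section Pairing

variable {ι k : Type*} [Fintype ι] [Field k] {ζ : ι → k}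

def rootOfUnityPairing (ζ : ι → k) (lam μ : ι → ℤ) : k :=
  ∏ i, ζ i ^ (lam i * μ i)

def rootOfUnityAnnihilator (ζ : ι → k) (S : Set (ι → ℤ)) : Set (ι → ℤ) :=
  {μ | ∀ lam ∈ S, rootOfUnityPairing ζ lam μ = 1}

lemma rootOfUnityPairing_add_left (hζ : ∀ i, ζ i ≠ 0) (a b μ : ι → ℤ) :
    rootOfUnityPairing ζ (a + b) μ = rootOfUnityPairing ζ a μ * rootOfUnityPairing ζ b μ := by
  simp_rw [rootOfUnityPairing, ← prod_mul_distrib, Pi.add_apply, add_mul, zpow_add₀ (hζ _)]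

lemma rootOfUnityPairing_neg_left (a μ : ι → ℤ) :
    rootOfUnityPairing ζ (-a) μ = (rootOfUnityPairing ζ a μ)⁻¹ := by
  simp_rw [rootOfUnityPairing, ← prod_inv_distrib, Pi.neg_apply, neg_mul, zpow_neg]

lemma rootOfUnityPairing_single_left [DecidableEq ι] (i : ι) (a : ℤ) (μ : ι → ℤ) :
    rootOfUnityPairing ζ (Pi.single i a) μ = ζ i ^ (a * μ i) := by
  rw [rootOfUnityPairing, Fintype.prod_eq_single i fun j hj => by
    rw [Pi.single_eq_of_ne hj, zero_mul, zpow_zero], Pi.single_eq_same]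

lemma rootOfUnityPairing_eq_one_of_mem_multipleLattice {m : ι → ℕ} (hζ : ∀ i, ζ i ^ m i = 1)
    (lam : ι → ℤ) {μ : ι → ℤ} (hμ : μ ∈ multipleLattice m) : rootOfUnityPairing ζ lam μ = 1 := by
  refine prod_eq_one fun i _ => ?_
  obtain ⟨t, ht⟩ := mem_multipleLattice.mp hμ i
  rw [ht, mul_left_comm, zpow_mul, zpow_natCast, hζ, one_zpow]

lemma rootOfUnityAnnihilator_closure (hζ : ∀ i, ζ i ≠ 0) (S : Set (ι → ℤ)) :
    rootOfUnityAnnihilator ζ (AddSubgroup.closure S) = rootOfUnityAnnihilator ζ S := by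
  refine subset_antisymm (fun μ h lam hlam => h lam (AddSubgroup.subset_closure hlam))
    fun μ h lam hlam => ?_
  induction hlam using AddSubgroup.closure_induction with
  | mem lam hlam => exact h lam hlam
  | zero => simp [rootOfUnityPairing]
  | add a b _ _ ha hb => rw [rootOfUnityPairing_add_left hζ, ha, hb, one_mul]
  | neg a _ ha => rw [rootOfUnityPairing_neg_left, ha, inv_one]

lemma rootOfUnityAnnihilator_univ {m : ι → ℕ} (hζ : ∀ i, IsPrimitiveRoot (ζ i) (m i)) :
    rootOfUnityAnnihilator ζ Set.univ = multipleLattice m := by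
  classical
  refine subset_antisymm (fun μ h => mem_multipleLattice.mpr fun i => ?_) fun μ hμ lam _ =>
    rootOfUnityPairing_eq_one_of_mem_multipleLattice (fun i => (hζ i).pow_eq_one) lam hμ
  refine (hζ i).zpow_eq_one_iff_dvd _ |>.mp ?_
  simpa [rootOfUnityPairing_single_left] using h (Pi.single i 1) trivial

lemma exists_rootOfUnityPairing_eq_toMul {m : ι → ℕ} [∀ i, NeZero (m i)]
    (hζ : ∀ i, IsPrimitiveRoot (ζ i) (m i)) (ψ : (ι → ℤ) →+ Additive kˣ)
    (hψ : multipleLattice m ≤ ψ.ker) :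
    ∃ c : ι → ℤ, ∀ lam, ((ψ lam).toMul : k) = rootOfUnityPairing ζ lam c := by
  classical
  have hψ_single (i : ι) (a : ℤ) :
      ((ψ (Pi.single i a)).toMul : k) = ((ψ (Pi.single i 1)).toMul : k) ^ a := by
    rw [← Units.val_zpow_eq_zpow_val, ← toMul_zsmul, ← map_zsmul, ← Pi.single_smul, smul_eq_mul,
      mul_one]
  have hψm (i : ι) : ((ψ (Pi.single i 1)).toMul : k) ^ m i = 1 := by
    have hmem : Pi.single i (m i : ℤ) ∈ multipleLattice m := mem_multipleLattice.mpr fun j => by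
      rcases eq_or_ne j i with rfl | hj
      · simp
      · simp [Pi.single_eq_of_ne hj]
    rw [← zpow_natCast, ← hψ_single, AddMonoidHom.mem_ker.mp (hψ hmem)]
    rfl
  choose c _ hc using fun i => (hζ i).eq_pow_of_pow_eq_one (hψm i)
  refine ⟨fun i => c i, fun lam => ?_⟩
  induction lam using Pi.single_induction with
  | zero => simp [rootOfUnityPairing]
  | add a b ha hb =>
    rw [rootOfUnityPairing_add_left (fun i => (hζ i).ne_zero (NeZero.ne _)), ← ha, ← hb, map_add,
      toMul_add, Units.val_mul]
  | single i a =>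
    rw [rootOfUnityPairing_single_left, mul_comm, zpow_mul, zpow_natCast, hc, hψ_single]

theorem eq_top_of_rootOfUnityAnnihilator_subset [IsSepClosed k] [CharZero k] {m : ι → ℕ}
    [∀ i, NeZero (m i)] (hζ : ∀ i, IsPrimitiveRoot (ζ i) (m i)) {L : AddSubgroup (ι → ℤ)}
    (hL : multipleLattice m ≤ L) (h : rootOfUnityAnnihilator ζ L ⊆ multipleLattice m) :
    L = ⊤ := by
  by_contra hne
  obtain ⟨μ₀, hμ₀⟩ : ∃ μ₀, μ₀ ∉ L := by
    by_contra! h'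
    exact hne (eq_top_iff.mpr fun μ _ => h' μ)
  have : L.FiniteIndex := AddSubgroup.finiteIndex_of_le hL
  have : NeZero (Monoid.exponent (Multiplicative ((ι → ℤ) ⧸ L)) : k) :=
    ⟨Nat.cast_ne_zero.mpr Monoid.exponent_ne_zero_of_finite⟩
  obtain ⟨χ, hχ⟩ := CommGroup.exists_apply_ne_one_of_hasEnoughRootsOfUnity
    (Multiplicative ((ι → ℤ) ⧸ L)) k (a := .ofAdd (μ₀ : (ι → ℤ) ⧸ L))
    (by simpa [QuotientAddGroup.eq_zero_iff] using hμ₀)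
  let ψ := (MonoidHom.toAdditiveRight χ).comp (QuotientAddGroup.mk' L)
  have hLψ : L ≤ ψ.ker := fun lam hlam => by
    simp [ψ, (QuotientAddGroup.eq_zero_iff lam).mpr hlam]
  obtain ⟨c, hc⟩ := exists_rootOfUnityPairing_eq_toMul hζ ψ (hL.trans hLψ)
  have hcm : c ∈ multipleLattice m := h fun lam hlam => by
    rw [← hc, AddMonoidHom.mem_ker.mp (hLψ hlam)]
    rfl
  apply hχ
  have := hc μ₀
  rw [rootOfUnityPairing_eq_one_of_mem_multipleLattice (fun i => (hζ i).pow_eq_one) μ₀ hcm] at this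
  exact Units.val_eq_one.mp this

end Pairing

section EigenSupport

variable {k V ι : Type*} [Field k] [AddCommGroup V] [Module k V] {σ : ι → V ≃ₗ[k] V}
  {m : ι → ℕ} {ζ : ι → k}

/-- The `ℤⁿ`-support of the multiloop algebra `M_m(V, σ)`. -/
def eigenSupport (σ : ι → V ≃ₗ[k] V) (ζ : ι → k) : Set (ι → ℤ) :=
  {lam | ∃ u : V, u ≠ 0 ∧ ∀ j, σ j u = (ζ j ^ lam j) • u}

lemma multipleLattice_le_closure_eigenSupport [Finite ι] [DecidableEq ι]
    (hζ : ∀ i, ζ i ^ m i = 1) (hζ0 : ∀ i, ζ i ≠ 0) (hS : (eigenSupport σ ζ).Nonempty) :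
    multipleLattice m ≤ AddSubgroup.closure (eigenSupport σ ζ) := by
  obtain ⟨lam, u, hu0, hu⟩ := hS
  refine multipleLattice_le fun i => ?_
  have hshift : lam + Pi.single i (m i : ℤ) ∈ eigenSupport σ ζ := by
    refine ⟨u, hu0, fun j => ?_⟩
    rw [hu j, Pi.add_apply, zpow_add₀ (hζ0 j)]
    rcases eq_or_ne j i with rfl | hj
    · rw [Pi.single_eq_same, zpow_natCast, hζ, mul_one]
    · rw [Pi.single_eq_of_ne hj, zpow_zero, mul_one]
  simpa using sub_mem (AddSubgroup.subset_closure hshift) (AddSubgroup.subset_closure ⟨u, hu0, hu⟩)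

variable [Fintype ι]

lemma eigenSupport_nonempty [Nontrivial V] (hσ : Pairwise fun i j => Commute (σ i) (σ j))
    (hσm : ∀ i, σ i ^ m i = 1) (hζ : ∀ i, IsPrimitiveRoot (ζ i) (m i))
    (hm : ∀ i, (m i : k) ≠ 0) : (eigenSupport σ ζ).Nonempty := by
  by_contra hS
  have hbot (r : ι → ℕ) :
      ⨅ i, Module.End.eigenspace (σ i : Module.End k V) (ζ i ^ r i) = ⊥ := by
    refine (Submodule.eq_bot_iff _).mpr fun v hv => by_contra fun hv0 => ?_
    refine hS ⟨fun i => r i, v, hv0, fun i => ?_⟩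
    simpa using Module.End.mem_eigenspace_iff.mp (Submodule.mem_iInf _ |>.mp hv i)
  simpa [hbot] using LinearEquiv.iSup_iInf_eigenspace_eq_top_of_pow_eq_one hσ hσm hζ hm

lemma coe_ker_zpowProd (hσ : Pairwise fun i j => Commute (σ i) (σ j))
    (hσm : ∀ i, σ i ^ m i = 1) (hζ : ∀ i, IsPrimitiveRoot (ζ i) (m i))
    (hm : ∀ i, (m i : k) ≠ 0) :
    ((zpowProd σ hσ).ker : Set (ι → ℤ)) = rootOfUnityAnnihilator ζ (eigenSupport σ ζ) := by
  have hζ0 (i : ι) : ζ i ≠ 0 := (hζ i).ne_zero fun h => hm i (by simp [h])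
  have hP (μ : ι → ℤ) {lam : ι → ℤ} {v : V} (hv : ∀ j, σ j v = ζ j ^ lam j • v) :
      (zpowProd σ hσ μ).toMul v = rootOfUnityPairing ζ lam μ • v := by
    simp_rw [toMul_zpowProd_apply_eq_smul hσ (fun i => zpow_ne_zero _ (hζ0 i)) hv,
      rootOfUnityPairing, zpow_mul]
  ext μ
  rw [SetLike.mem_coe, AddMonoidHom.mem_ker]
  constructor
  · rintro h lam ⟨u, hu0, hu⟩
    refine smul_left_injective k hu0 ?_
    simpa [h] using (hP μ hu).symm
  · intro h
    suffices (zpowProd σ hσ μ).toMul = 1 from congrArg Additive.ofMul this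
    have hle : ⨆ r : ι → ℕ, ⨅ i, Module.End.eigenspace (σ i : Module.End k V) (ζ i ^ r i) ≤
        LinearMap.eqLocus ((zpowProd σ hσ μ).toMul : Module.End k V) LinearMap.id := by
      refine iSup_le fun r v hv => ?_
      have hv' (i : ι) : σ i v = ζ i ^ (r i : ℤ) • v := by
        simpa using Module.End.mem_eigenspace_iff.mp (Submodule.mem_iInf _ |>.mp hv i)
      rcases eq_or_ne v 0 with rfl | hv0
      · simp
      · simp [hP μ hv', h _ ⟨v, hv0, hv'⟩]
    rw [LinearEquiv.iSup_iInf_eigenspace_eq_top_of_pow_eq_one hσ hσm hζ hm] at hle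
    exact LinearEquiv.ext fun v => hle Submodule.mem_top

end EigenSupport

theorem stmt9_general {k 𝒜 : Type*} [Field k] [CharZero k] [IsAlgClosed k]
    [NonUnitalNonAssocRing 𝒜] [Module k 𝒜]
    [Nontrivial 𝒜]
    {n : ℕ} (m : Fin n → ℕ) (hm : ∀ i, 0 < m i)
    (σ : Fin n → (𝒜 ≃ₗ[k] 𝒜))
    (hcomm : ∀ i j x, σ i (σ j x) = σ j (σ i x))
    (hord : ∀ i x, (⇑(σ i))^[m i] x = x)
    (ζ : Fin n → k) (hζ : ∀ i, IsPrimitiveRoot (ζ i) (m i)) :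
    AddSubgroup.closure
        {lam : Fin n → ℤ | ∃ u : 𝒜, u ≠ 0 ∧ ∀ j, σ j u = (ζ j ^ lam j) • u} = ⊤ ↔
      Nat.card (Subgroup.closure (Set.range σ)) = ∏ i, m i := by
  have (i : Fin n) : NeZero (m i) := ⟨(hm i).ne'⟩
  have hσ : Pairwise fun i j => Commute (σ i) (σ j) := fun i j _ => LinearEquiv.ext (hcomm i j)
  have hσm (i : Fin n) : σ i ^ m i = 1 :=
    LinearEquiv.ext fun x => by rw [LinearEquiv.pow_apply, hord]; rfl
  have hmk (i : Fin n) : (m i : k) ≠ 0 := Nat.cast_ne_zero.mpr (hm i).ne'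
  have hζ0 (i : Fin n) : ζ i ≠ 0 := (hζ i).ne_zero (hm i).ne'
  have hker : ((zpowProd σ hσ).ker : Set (Fin n → ℤ)) =
      rootOfUnityAnnihilator ζ (AddSubgroup.closure (eigenSupport σ ζ)) := by
    rw [coe_ker_zpowProd hσ hσm hζ hmk, rootOfUnityAnnihilator_closure hζ0]
  have hlat : multipleLattice m ≤ (zpowProd σ hσ).ker := by
    rw [← SetLike.coe_subset_coe, hker, ← rootOfUnityAnnihilator_univ hζ]
    exact fun μ hμ lam _ => hμ lam trivial
  change AddSubgroup.closure (eigenSupport σ ζ) = ⊤ ↔ _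
  rw [← index_ker_zpowProd σ hσ, ← index_multipleLattice,
    AddSubgroup.index_eq_iff_le_of_le hlat AddSubgroup.FiniteIndex.index_ne_zero,
    ← SetLike.coe_subset_coe, hker]
  refine ⟨fun hS => by rw [hS, AddSubgroup.coe_top, rootOfUnityAnnihilator_univ hζ], fun h => ?_⟩
  exact eq_top_of_rootOfUnityAnnihilator_subset hζ (multipleLattice_le_closure_eigenSupport
    (fun i => (hζ i).pow_eq_one) hζ0 (eigenSupport_nonempty hσ hσm hζ hmk)) h

/-- The `ℤⁿ`-support of the multiloop algebra `M_m(𝒜, σ)` generates `ℤⁿ` as a group if and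
only if `|⟨σ₁, …, σₙ⟩| = m₁ ⋯ mₙ`.  The support is the set of `λ ∈ ℤⁿ` for which the
simultaneous eigenspace `𝒜^{λ̄} = {u : σⱼ u = ζⱼ^{λⱼ} u}` is nonzero. -/
theorem stmt9 {k 𝒜 : Type*} [Field k] [CharZero k] [IsAlgClosed k]
    [NonUnitalNonAssocRing 𝒜] [Module k 𝒜] [SMulCommClass k 𝒜 𝒜] [IsScalarTower k 𝒜 𝒜]
    [Nontrivial 𝒜]
    {n : ℕ} (m : Fin n → ℕ) (hm : ∀ i, 0 < m i)
    (σ : Fin n → (𝒜 ≃ₗ[k] 𝒜))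
    (hmul : ∀ i (x y : 𝒜), σ i (x * y) = σ i x * σ i y)
    (hcomm : ∀ i j x, σ i (σ j x) = σ j (σ i x))
    (hord : ∀ i x, (⇑(σ i))^[m i] x = x)
    (ζ : Fin n → k) (hζ : ∀ i, IsPrimitiveRoot (ζ i) (m i)) :
    AddSubgroup.closure
        {lam : Fin n → ℤ | ∃ u : 𝒜, u ≠ 0 ∧ ∀ j, σ j u = (ζ j ^ lam j) • u} = ⊤ ↔
      Nat.card (Subgroup.closure (Set.range σ)) = ∏ i, m i :=
  stmt9_general m hm σ hcomm hord ζ hζ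
end

section
/- Let ℬ = ⊕_{λ∈Λ} ℬ^λ be a graded-simple Λ-graded algebra and suppose dim ℬ^λ = 1 for some λ ∈ Λ. Then ℬ is graded-central-simple, i.e., the degree-0 component of its centroid equals k·1. -/
/-!
A degree-`0` centroid element `c` acts on the one-dimensional component `g lam₀` as a scalar `a`.
Then `c - a • id` is again a degree-`0` centroid element, so its kernel is a graded ideal; that
ideal contains a nonzero vector of `g lam₀`, hence is everything by graded-simplicity.
-/

open LinearMap

theorem LinearMap.iSup_ker_inf_eq_ker {R M N ι : Type*} [Ring R] [AddCommGroup M] [Module R M]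
    [AddCommGroup N] [Module R N] {p : ι → Submodule R M} {q : ι → Submodule R N}
    (hp : iSup p = ⊤) (hq : iSupIndep q) (f : M →ₗ[R] N) (hf : ∀ i, ∀ x ∈ p i, f x ∈ q i) :
    ⨆ i, ker f ⊓ p i = ker f := by
  refine le_antisymm (iSup_le fun _ => inf_le_left) fun x hx => ?_
  obtain ⟨y, hy, rfl⟩ := (Submodule.mem_iSup_iff_exists_finsupp p x).mp (hp ▸ Submodule.mem_top)
  have hfy : ∀ i ∈ y.support, f (y i) = 0 :=
    (iSupIndep_iff_finsetSum_eq_zero_imp_eq_zero q).mp hq y.support (fun i => f (y i))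
      (fun i _ => hf i _ (hy i)) (by simpa [Finsupp.sum, map_sum] using hx)
  exact Submodule.sum_mem _ fun i hi => Submodule.mem_iSup_of_mem i ⟨hfy i hi, hy i⟩

theorem eq_zero_of_centroid_of_ker_ne_bot {R B ι : Type*} [Ring R] [NonUnitalNonAssocRing B]
    [Module R B] {g : ι → Submodule R B} (hg_top : iSup g = ⊤) (hg_indep : iSupIndep g)
    (hsimple : ∀ I : Submodule R B,
      (∀ x : B, ∀ y ∈ I, x * y ∈ I ∧ y * x ∈ I) →
      (⨆ i, I ⊓ g i) = I → I = ⊥ ∨ I = ⊤)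
    {d : B →ₗ[R] B} (hdl : ∀ x y : B, d (x * y) = x * d y) (hdr : ∀ x y : B, d (x * y) = d x * y)
    (hdg : ∀ i, ∀ x ∈ g i, d x ∈ g i) (hker : ker d ≠ ⊥) : d = 0 := by
  have hideal : ∀ x : B, ∀ y ∈ ker d, x * y ∈ ker d ∧ y * x ∈ ker d := fun x y hy =>
    ⟨by rw [mem_ker, hdl, mem_ker.mp hy, mul_zero], by rw [mem_ker, hdr, mem_ker.mp hy, zero_mul]⟩
  have hgraded : ⨆ i, ker d ⊓ g i = ker d := iSup_ker_inf_eq_ker hg_top hg_indep d hdg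
  exact ker_eq_top.mp ((hsimple _ hideal hgraded).resolve_left hker)

theorem stmt10_general {k B Λ : Type*} [Field k] [NonUnitalNonAssocRing B] [Module k B]
    [SMulCommClass k B B] [IsScalarTower k B B] [AddCommGroup Λ] [DecidableEq Λ]
    (g : Λ → Submodule k B)
    (hinternal : DirectSum.IsInternal g)
    (hsimple : ∀ I : Submodule k B,
      (∀ x : B, ∀ y ∈ I, x * y ∈ I ∧ y * x ∈ I) →
      (⨆ lam, I ⊓ g lam) = I → I = ⊥ ∨ I = ⊤)
    (lam₀ : Λ) (hdim : Module.finrank k (g lam₀) = 1) :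
    ∀ c : B →ₗ[k] B,
      (∀ x y : B, c (x * y) = x * c y) →
      (∀ x y : B, c (x * y) = c x * y) →
      (∀ lam : Λ, ∀ x ∈ g lam, c x ∈ g lam) →
      ∃ a : k, c = a • (LinearMap.id : B →ₗ[k] B) := by
  intro c hcl hcr hcg
  obtain ⟨v, hv0, hv⟩ := finrank_eq_one_iff'.mp hdim
  obtain ⟨a, ha⟩ := hv ⟨c v, hcg lam₀ v v.2⟩
  have hcv : c v = a • (v : B) := congrArg Subtype.val ha.symm
  refine ⟨a, sub_eq_zero.mp (eq_zero_of_centroid_of_ker_ne_bot (d := c - a • LinearMap.id)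
    hinternal.submodule_iSup_eq_top hinternal.submodule_iSupIndep hsimple ?_ ?_ ?_ ?_)⟩
  · intro x y
    simp [hcl, mul_sub, mul_smul_comm]
  · intro x y
    simp [hcr, sub_mul, smul_mul_assoc]
  · intro lam x hx
    exact sub_mem (hcg lam x hx) (Submodule.smul_mem _ a hx)
  · refine (Submodule.ne_bot_iff _).mpr ⟨v, ?_, fun h => hv0 (Subtype.ext h)⟩
    simp [hcv]

/-- A graded-simple `Λ`-graded algebra `B` with a one-dimensional homogeneous component is
graded-central-simple: every degree-`0` centroid element (a `k`-linear endomorphism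
commuting with all left and right multiplications and preserving each homogeneous
component) is a scalar multiple of the identity. -/
theorem stmt10 {k B Λ : Type*} [Field k] [NonUnitalNonAssocRing B] [Module k B]
    [SMulCommClass k B B] [IsScalarTower k B B] [AddCommGroup Λ] [DecidableEq Λ]
    (g : Λ → Submodule k B)
    (hinternal : DirectSum.IsInternal g)
    (hgradedMul : ∀ lam mu : Λ, ∀ x ∈ g lam, ∀ y ∈ g mu, x * y ∈ g (lam + mu))
    (hBB : ∃ x y : B, x * y ≠ 0)
    (hsimple : ∀ I : Submodule k B,
      (∀ x : B, ∀ y ∈ I, x * y ∈ I ∧ y * x ∈ I) →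
      (⨆ lam, I ⊓ g lam) = I → I = ⊥ ∨ I = ⊤)
    (lam₀ : Λ) (hdim : Module.finrank k (g lam₀) = 1) :
    ∀ c : B →ₗ[k] B,
      (∀ x y : B, c (x * y) = x * c y) →
      (∀ x y : B, c (x * y) = c x * y) →
      (∀ lam : Λ, ∀ x ∈ g lam, c x ∈ g lam) →
      ∃ a : k, c = a • (LinearMap.id : B →ₗ[k] B) :=
  stmt10_general g hinternal hsimple lam₀ hdim
end

section
/- Let L be a Lie Λ-torus of type Δ. For α ∈ Q set Λ_α = {λ ∈ Λ : L_α^λ ≠ 0}. If α is a nonzero element of supp_Q(L), then Λ_α + 2Λ_α ⊆ Λ_α and −Λ_α = Λ_α. -/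
/-!
Let `δ ≠ 0` with `L_δ^μ ≠ 0`. Axiom (LT2)(ii) provides an `sl₂`-triple `(⁅e, f⁆, e, f)` with
`e ∈ L_δ^μ`, `f ∈ L_{-δ}^{-μ}`, and `ad e`, `ad f` are nilpotent because `Δ` is finite. The Lie
automorphism `θ = exp (ad e) exp (ad (-f)) exp (ad e)` sends `h = ⁅e, f⁆` to `-h` and preserves the
string `⨁ₘ L_{β+mδ}^{ν+mμ}`, whose `m`-th piece lies in the `⟨β, δ^∨⟩ + 2m` eigenspace of `ad h`. Hence
`θ` maps `L_β^ν` injectively into `L_{β-nδ}^{ν-nμ}` with `n = ⟨β, δ^∨⟩`.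

With `β = δ = α` this gives `2Λ_α - Λ_α ⊆ Λ_{-α}`, and `Λ_{-α} = -Λ_α` since `f ≠ 0`; this yields
`Λ_α + 2Λ_α ⊆ Λ_α` once `-Λ_α = Λ_α` is known. For the latter, if `α` is not divisible by `2` then
`0 ∈ Λ_α` by (LT2)(i), so `-λ = 2·0 - λ ∈ Λ_α`; if `α = 2γ`, reflect in `γ` with `μ = 0`.
-/

/-- `f` is a coroot functional for `α` with respect to the set `Δ`. -/
def IsCoroot {k 𝒳 : Type*} [Field k] [AddCommGroup 𝒳] [Module k 𝒳]
    (Δ : Set 𝒳) (α : 𝒳) (f : Module.Dual k 𝒳) : Prop :=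
  f α = 2 ∧ ∀ β ∈ Δ, β - f β • α ∈ Δ

/-- A finite irreducible root system (containing `0`) in `𝒳`, together with a choice of
coroot functional for each nonzero root. -/
structure RootSystemIn (k 𝒳 : Type*) [Field k] [AddCommGroup 𝒳] [Module k 𝒳] where
  Δ : Set 𝒳
  coroot : 𝒳 → Module.Dual k 𝒳
  finite : Δ.Finite
  zero_mem : (0 : 𝒳) ∈ Δ
  span_eq : Submodule.span k Δ = ⊤
  isCoroot : ∀ α ∈ Δ, α ≠ 0 → IsCoroot Δ α (coroot α)
  pairing_int : ∀ α ∈ Δ, α ≠ 0 → ∀ β ∈ Δ, ∃ z : ℤ, coroot α β = (z : k)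
  irreducible : ∀ A B : Set 𝒳, A ∪ B = Δ \ {0} → A ∩ B = ∅ →
    (∀ α ∈ A, ∀ β ∈ B, coroot β α = 0) → A = ∅ ∨ B = ∅

/-- A Lie `Λ`-torus of type `Δ`: a `Q × Λ`-graded Lie algebra (the grading being recorded
by the family `g` of subspaces indexed by `𝒳 × Λ`, supported on `Δ`) satisfying the axioms
(LT1)–(LT4). -/
structure IsLieTorus {k 𝒳 Λ L : Type*} [Field k] [AddCommGroup 𝒳] [Module k 𝒳]
    [DecidableEq 𝒳] [AddCommGroup Λ] [DecidableEq Λ] [LieRing L] [LieAlgebra k L]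
    (R : RootSystemIn k 𝒳) (g : 𝒳 → Λ → Submodule k L) : Prop where
  isInternal : DirectSum.IsInternal fun p : 𝒳 × Λ => g p.1 p.2
  bracket_mem : ∀ (α β : 𝒳) (lam mu : Λ), ∀ x ∈ g α lam, ∀ y ∈ g β mu,
    ⁅x, y⁆ ∈ g (α + β) (lam + mu)
  supp_subset : ∀ (α : 𝒳) (lam : Λ), g α lam ≠ ⊥ → α ∈ R.Δ
  lt2i : ∀ α ∈ R.Δ, α ≠ 0 → (¬ ∃ γ ∈ R.Δ, α = (2 : k) • γ) → g α 0 ≠ ⊥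
  lt2ii : ∀ (α : 𝒳) (lam : Λ), α ≠ 0 → g α lam ≠ ⊥ →
    ∃ e f : L, e ∈ g α lam ∧ f ∈ g (-α) (-lam) ∧
      g α lam = Submodule.span k {e} ∧ g (-α) (-lam) = Submodule.span k {f} ∧
      ∀ (β : 𝒳) (mu : Λ), ∀ x ∈ g β mu, ⁅⁅e, f⁆, x⁆ = R.coroot α β • x
  lt3 : LieSubalgebra.lieSpan k L
    (⋃ α ∈ R.Δ \ {0}, ⋃ lam : Λ, (g α lam : Set L)) = ⊤
  lt4 : AddSubgroup.closure {lam : Λ | ∃ α : 𝒳, g α lam ≠ ⊥} = ⊤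

noncomputable abbrev LieAlgebra.restrictScalarsRat (k L : Type*) [Field k] [CharZero k]
    [LieRing L] [LieAlgebra k L] : LieAlgebra ℚ L :=
  { Module.compHom L (algebraMap ℚ k) with
    lie_smul := fun q x y => lie_smul (algebraMap ℚ k q) x y }

open LieAlgebra

namespace LieDerivation

variable {R k L : Type*} [CommRing R] [Field k] [LieRing L] [LieAlgebra R L] [LieAlgebra k L]
  [LieAlgebra ℚ L]

lemma exp_apply_mem {D : LieDerivation k L L} (hD : IsNilpotent D.toLinearMap)
    {p : Submodule k L} (hp : ∀ y ∈ p, D y ∈ p) {y : L} (hy : y ∈ p) : exp D hD y ∈ p := by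
  obtain ⟨n, hn⟩ := id hD
  rw [exp_map_apply, IsNilpotent.exp_eq_sum hn, LinearMap.sum_apply]
  refine p.sum_mem fun i _ => ?_
  have := p.smul_mem ((i.factorial⁻¹ : ℚ) : k) (Module.End.pow_apply_mem_of_forall_mem i hp y hy)
  rwa [ratCast_smul_eq k ℚ, Rat.cast_id] at this

lemma exp_apply_of_apply_apply_apply_eq_zero {D : LieDerivation R L L}
    (hD : IsNilpotent D.toLinearMap) {x : L} (hx : D (D (D x)) = 0) :
    exp D hD x = x + D x + (2 : ℚ)⁻¹ • D (D x) := by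
  have h3 : (D.toLinearMap ^ 3) • x = 0 := by
    simpa [pow_succ, Module.End.mul_apply] using hx
  rw [exp_map_apply, ← Module.End.smul_def, IsNilpotent.exp_smul_eq_sum h3 hD]
  simp [Finset.sum_range_succ, pow_succ, Module.End.mul_apply]

end LieDerivation

namespace IsSl2Triple

variable {k L : Type*} [Field k] [LieRing L] [LieAlgebra k L] [LieAlgebra ℚ L] {h e f : L}

/-- The witness is `θ = exp (ad e) ∘ exp (ad (-f)) ∘ exp (ad e)`. -/
lemma exists_lieEquiv_apply_h_eq_neg (t : IsSl2Triple h e f)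
    (he : IsNilpotent (ad k L e)) (hf : IsNilpotent (ad k L f)) :
    ∃ θ : L ≃ₗ⁅k⁆ L, θ h = -h ∧ ∀ p : Submodule k L, (∀ y ∈ p, ⁅e, y⁆ ∈ p) →
      (∀ y ∈ p, ⁅f, y⁆ ∈ p) → ∀ y ∈ p, θ y ∈ p := by
  have he' : IsNilpotent (LieDerivation.ad k L e : L →ₗ[k] L) := by simpa using he
  have hf' : IsNilpotent (LieDerivation.ad k L (-f) : L →ₗ[k] L) := by simpa using hf.neg
  set E := LieDerivation.exp _ he'
  set F := LieDerivation.exp _ hf'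
  refine ⟨E.trans (F.trans E), ?_, fun p hpe hpf y hy => ?_⟩
  · have h1 : E h = h - 2 • e := by
      rw [LieDerivation.exp_apply_of_apply_apply_apply_eq_zero]
      · simp [← lie_skew e h, t.lie_h_e_nsmul, sub_eq_add_neg]
      · simp [← lie_skew e h, t.lie_h_e_nsmul]
    have h2 : F (h - 2 • e) = -h - 2 • e := by
      rw [LieDerivation.exp_apply_of_apply_apply_apply_eq_zero]
      · simp [← lie_skew f h, ← lie_skew f e, t.lie_h_f_nsmul, t.lie_e_f]
        module
      · simp [← lie_skew f h, ← lie_skew f e, t.lie_h_f_nsmul, t.lie_e_f]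
    have h3 : E (-h - 2 • e) = -h := by
      rw [LieDerivation.exp_apply_of_apply_apply_apply_eq_zero]
      · simp [← lie_skew e h, t.lie_h_e_nsmul]
      · simp [← lie_skew e h, t.lie_h_e_nsmul]
    simp [h1, h2, h3]
  · have hpe' : ∀ y ∈ p, LieDerivation.ad k L e y ∈ p := by simpa using hpe
    have hpf' : ∀ y ∈ p, LieDerivation.ad k L (-f) y ∈ p := fun y hy => by
      simpa using p.neg_mem (hpf y hy)
    exact LieDerivation.exp_apply_mem _ hpe' <| LieDerivation.exp_apply_mem _ hpf' <|
      LieDerivation.exp_apply_mem _ hpe' hy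

end IsSl2Triple

lemma Module.End.mem_of_mem_iSup_of_le_eigenspace {K V ι : Type*} [Field K] [AddCommGroup V]
    [Module K V] (φ : Module.End K V) {χ : ι → K} (hχ : Function.Injective χ)
    {p : ι → Submodule K V} (hp : ∀ i, p i ≤ φ.eigenspace (χ i)) {v : V}
    (hv : v ∈ ⨆ i, p i) {i : ι} (hvi : φ v = χ i • v) : v ∈ p i := by
  rw [iSup_split_single p i, Submodule.mem_sup] at hv
  obtain ⟨a, ha, b, hb, rfl⟩ := hv
  have hb_eigen : b ∈ φ.eigenspace (χ i) := by
    have hav : a + b ∈ φ.eigenspace (χ i) := Module.End.mem_eigenspace_iff.2 hvi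
    simpa using sub_mem hav (hp i ha)
  have hb_others : b ∈ ⨆ μ ∈ {χ i}ᶜ, φ.eigenspace μ :=
    iSup₂_le (fun j hj => (hp j).trans (le_iSup₂_of_le (f := fun μ (_ : μ ∈ ({χ i}ᶜ : Set K)) =>
      φ.eigenspace μ) (χ j) (hχ.ne hj) le_rfl)) hb
  have hb0 : b = 0 := by
    have := (φ.eigenspaces_iSupIndep (χ i)).le_bot ⟨hb_eigen, by simpa using hb_others⟩
    simpa using this
  simpa [hb0] using ha

open scoped Pointwise in
lemma Set.Finite.exists_nsmul_notMem_sub {k 𝒳 : Type*} [Field k] [CharZero k] [AddCommGroup 𝒳]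
    [Module k 𝒳] {Δ : Set 𝒳} (hΔ : Δ.Finite) {δ : 𝒳} (hδ : δ ≠ 0) :
    ∃ N : ℕ, N • δ ∉ Δ - Δ := by
  have hinj : Function.Injective fun n : ℕ => n • δ := fun a b hab => by
    have : (a : k) • δ = (b : k) • δ := by simpa only [Nat.cast_smul_eq_nsmul] using hab
    exact_mod_cast smul_left_injective k hδ this
  exact ((hΔ.sub hΔ).preimage hinj.injOn).exists_notMem

namespace IsLieTorus

variable {k 𝒳 Λ L : Type*} [Field k] [AddCommGroup 𝒳] [Module k 𝒳]
    [DecidableEq 𝒳] [AddCommGroup Λ] [DecidableEq Λ] [LieRing L] [LieAlgebra k L]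
    {R : RootSystemIn k 𝒳} {g : 𝒳 → Λ → Submodule k L}

lemma pow_ad_apply_mem (hLT : IsLieTorus R g) {δ : 𝒳} {μ : Λ} {e : L} (he : e ∈ g δ μ)
    (n : ℕ) {β : 𝒳} {ν : Λ} {x : L} (hx : x ∈ g β ν) :
    (ad k L e ^ n) x ∈ g (β + n • δ) (ν + n • μ) := by
  induction n with
  | zero => simpa using hx
  | succ n ih =>
    have := hLT.bracket_mem δ _ μ _ e he _ ih
    rw [pow_succ', Module.End.mul_apply, ad_apply]
    convert this using 2 <;> rw [succ_nsmul] <;> abel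

lemma lie_mem_iSup_zsmul (hLT : IsLieTorus R g) {δ : 𝒳} {μ : Λ} {j : ℤ} {e : L}
    (he : e ∈ g (j • δ) (j • μ)) (β : 𝒳) (ν : Λ) {y : L}
    (hy : y ∈ ⨆ m : ℤ, g (β + m • δ) (ν + m • μ)) :
    ⁅e, y⁆ ∈ ⨆ m : ℤ, g (β + m • δ) (ν + m • μ) := by
  refine Submodule.iSup_induction _ (motive := fun y => ⁅e, y⁆ ∈ _) hy (fun m z hz => ?_)
    (by simp) (fun y z hy hz => by simpa using add_mem hy hz)
  refine Submodule.mem_iSup_of_mem (m + j) ?_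
  convert hLT.bracket_mem _ _ _ _ e he z hz using 2 <;> rw [add_smul] <;> abel

variable [CharZero k]

lemma isNilpotent_ad (hLT : IsLieTorus R g) {δ : 𝒳} (hδ : δ ≠ 0) {μ : Λ} {e : L}
    (he : e ∈ g δ μ) : IsNilpotent (ad k L e) := by
  obtain ⟨N, hN⟩ := Set.Finite.exists_nsmul_notMem_sub (k := k) R.finite hδ
  have hzero : ∀ β ν, ∀ x ∈ g β ν, (ad k L e ^ N) x = 0 := by
    intro β ν x hx
    by_contra hne
    have hβ : g β ν ≠ ⊥ := (Submodule.ne_bot_iff _).2 ⟨x, hx, fun h => hne (by simp [h])⟩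
    have hβN : g (β + N • δ) (ν + N • μ) ≠ ⊥ :=
      (Submodule.ne_bot_iff _).2 ⟨_, hLT.pow_ad_apply_mem he N hx, hne⟩
    exact hN ⟨_, hLT.supp_subset _ _ hβN, _, hLT.supp_subset _ _ hβ, add_sub_cancel_left _ _⟩
  refine ⟨N, LinearMap.ext fun x => ?_⟩
  have hx : x ∈ ⨆ p : 𝒳 × Λ, g p.1 p.2 := by
    rw [hLT.isInternal.submodule_iSup_eq_top]; trivial
  exact Submodule.iSup_induction _ (motive := fun x => (ad k L e ^ N) x = 0) hx
    (fun p => hzero p.1 p.2) (by simp) (fun x y hx hy => by simp [hx, hy])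

lemma exists_isSl2Triple (hLT : IsLieTorus R g) {δ : 𝒳} (hδ : δ ≠ 0) {μ : Λ}
    (hδμ : g δ μ ≠ ⊥) :
    ∃ e ∈ g δ μ, ∃ f ∈ g (-δ) (-μ), IsSl2Triple ⁅e, f⁆ e f ∧
      ∀ β ν, ∀ x ∈ g β ν, ⁅⁅e, f⁆, x⁆ = R.coroot δ β • x := by
  obtain ⟨e, f, he, hf, hspan, -, hcoroot⟩ := hLT.lt2ii δ μ hδ hδμ
  have hδδ : R.coroot δ δ = 2 := (R.isCoroot δ (hLT.supp_subset δ μ hδμ) hδ).1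
  have he0 : e ≠ 0 := by
    rintro rfl
    exact hδμ (by rw [hspan, Submodule.span_zero_singleton])
  have hhe : ⁅⁅e, f⁆, e⁆ = 2 • e := by rw [hcoroot δ μ e he, hδδ, two_smul, two_nsmul]
  refine ⟨e, he, f, hf, ⟨?_, rfl, hhe, ?_⟩, hcoroot⟩
  · intro h0
    rw [h0, zero_lie, eq_comm, two_nsmul, ← two_smul k, smul_eq_zero] at hhe
    exact hhe.elim two_ne_zero he0
  · rw [hcoroot _ _ f hf, map_neg, hδδ, neg_smul, two_smul, two_nsmul]

/-- The reflection relation `Λ_β - ⟨β, δ^∨⟩ Λ_δ ⊆ Λ_{w_δ β}`. -/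
theorem sub_zsmul_ne_bot (hLT : IsLieTorus R g) {δ : 𝒳} (hδ : δ ≠ 0) {μ : Λ}
    (hδμ : g δ μ ≠ ⊥) {β : 𝒳} {ν : Λ} (hβν : g β ν ≠ ⊥) {n : ℤ}
    (hn : R.coroot δ β = n) : g (β - n • δ) (ν - n • μ) ≠ ⊥ := by
  let _ := LieAlgebra.restrictScalarsRat k L
  obtain ⟨e, he, f, hf, t, hcoroot⟩ := hLT.exists_isSl2Triple hδ hδμ
  have hδδ : R.coroot δ δ = 2 := (R.isCoroot δ (hLT.supp_subset δ μ hδμ) hδ).1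
  obtain ⟨θ, hθh, hθmem⟩ := t.exists_lieEquiv_apply_h_eq_neg (hLT.isNilpotent_ad hδ he)
    (hLT.isNilpotent_ad (neg_ne_zero.2 hδ) hf)
  obtain ⟨x, hx, hx0⟩ := (Submodule.ne_bot_iff _).1 hβν
  have hθx : θ x ∈ ⨆ m : ℤ, g (β + m • δ) (ν + m • μ) := by
    exact hθmem _ (fun y => hLT.lie_mem_iSup_zsmul (j := 1) (by simpa using he) β ν)
      (fun y => hLT.lie_mem_iSup_zsmul (j := -1) (by simpa using hf) β ν) x
      (Submodule.mem_iSup_of_mem 0 (by simpa using hx))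
  have hθx_eigen : ad k L ⁅e, f⁆ (θ x) = ((n : k) + 2 * ((-n : ℤ) : k)) • θ x := by
    have : ⁅⁅e, f⁆, θ x⁆ = -⁅θ ⁅e, f⁆, θ x⁆ := by rw [hθh, neg_lie, neg_neg]
    rw [ad_apply, this, ← LieEquiv.map_lie, hcoroot β ν x hx, hn, map_smul]
    push_cast; module
  have hstring : ∀ m : ℤ, g (β + m • δ) (ν + m • μ) ≤
      (ad k L ⁅e, f⁆).eigenspace ((n : k) + 2 * (m : k)) := fun m z hz => by
    rw [Module.End.mem_eigenspace_iff, ad_apply, hcoroot _ _ z hz, map_add, map_zsmul, hn, hδδ,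
      zsmul_eq_mul]
    ring_nf
  have hinj : Function.Injective fun m : ℤ => (n : k) + 2 * (m : k) := fun a b hab => by
    simpa using hab
  have := (ad k L ⁅e, f⁆).mem_of_mem_iSup_of_le_eigenspace hinj hstring hθx hθx_eigen
  refine (Submodule.ne_bot_iff _).2 ⟨θ x, ?_, by simpa using hx0⟩
  simpa [sub_eq_add_neg] using this

lemma neg_ne_bot (hLT : IsLieTorus R g) {α : 𝒳} (hα : α ≠ 0) {lam : Λ} (h : g α lam ≠ ⊥) :
    g (-α) (-lam) ≠ ⊥ := by
  obtain ⟨_, -, f, hf, t, -⟩ := hLT.exists_isSl2Triple hα h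
  exact (Submodule.ne_bot_iff _).2 ⟨f, hf, t.f_ne_zero⟩

lemma two_nsmul_sub_ne_bot (hLT : IsLieTorus R g) {α : 𝒳} (hα : α ≠ 0) {lam mu : Λ}
    (hlam : g α lam ≠ ⊥) (hmu : g α mu ≠ ⊥) : g α (2 • mu - lam) ≠ ⊥ := by
  have hαα : R.coroot α α = ((2 : ℤ) : k) := by
    simpa using (R.isCoroot α (hLT.supp_subset α mu hmu) hα).1
  have hreflect := hLT.sub_zsmul_ne_bot hα hmu hlam hαα
  rw [show α - (2 : ℤ) • α = -α by module] at hreflect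
  simpa [two_zsmul, two_nsmul] using hLT.neg_ne_bot (neg_ne_zero.2 hα) hreflect

/-- If `α = 2γ` then `L_γ^0 ≠ 0` by (LT2)(i), and the reflection in `γ` sends `α` to `-α`. -/
lemma neg_ne_bot_of_ne_bot (hLT : IsLieTorus R g) {α : 𝒳} (hα : α ≠ 0) {lam : Λ}
    (hlam : g α lam ≠ ⊥) : g α (-lam) ≠ ⊥ := by
  have hαΔ : α ∈ R.Δ := hLT.supp_subset α lam hlam
  by_cases hdiv : ∃ γ ∈ R.Δ, α = (2 : k) • γ
  · obtain ⟨γ, hγΔ, rfl⟩ := hdiv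
    have hγ : γ ≠ 0 := by rintro rfl; simp at hα
    have hγ_indiv : ¬ ∃ γ' ∈ R.Δ, γ = (2 : k) • γ' := by
      rintro ⟨γ', hγ'Δ, rfl⟩
      obtain ⟨z, hz⟩ := R.pairing_int _ hαΔ hα γ' hγ'Δ
      have h4z : (4 : k) * z = 2 := by
        have h4 : (2 : k) • (2 : k) • γ' = (4 : k) • γ' := by rw [smul_smul]; norm_num
        have := (R.isCoroot _ hαΔ hα).1
        rw [h4] at this hz
        rwa [map_smul, hz, smul_eq_mul] at this
      have : (4 * z : ℤ) = 2 := by exact_mod_cast h4z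
      omega
    have hγγ : R.coroot γ γ = 2 := (R.isCoroot γ hγΔ hγ).1
    have hγα : R.coroot γ ((2 : k) • γ) = ((4 : ℤ) : k) := by
      rw [map_smul, hγγ]; norm_num
    have hreflect := hLT.sub_zsmul_ne_bot hγ (hLT.lt2i γ hγΔ hγ hγ_indiv) hlam hγα
    rw [show (2 : k) • γ - (4 : ℤ) • γ = -((2 : k) • γ) by module, smul_zero, sub_zero] at hreflect
    simpa using hLT.neg_ne_bot (neg_ne_zero.2 hα) hreflect
  · simpa using hLT.two_nsmul_sub_ne_bot hα hlam (hLT.lt2i α hαΔ hα hdiv)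

end IsLieTorus

theorem stmt13_general {k 𝒳 Λ L : Type*} [Field k] [CharZero k] [AddCommGroup 𝒳] [Module k 𝒳]
    [DecidableEq 𝒳] [AddCommGroup Λ] [DecidableEq Λ] [LieRing L] [LieAlgebra k L]
    (R : RootSystemIn k 𝒳) (g : 𝒳 → Λ → Submodule k L) (hLT : IsLieTorus R g)
    (α : 𝒳) (hα : α ≠ 0) :
    (∀ lam mu : Λ, g α lam ≠ ⊥ → g α mu ≠ ⊥ → g α (lam + (mu + mu)) ≠ ⊥) ∧
    (∀ lam : Λ, g α lam ≠ ⊥ ↔ g α (-lam) ≠ ⊥) := by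
  have hneg {lam : Λ} : g α lam ≠ ⊥ → g α (-lam) ≠ ⊥ := hLT.neg_ne_bot_of_ne_bot hα
  refine ⟨fun lam mu hlam hmu => ?_, fun lam => ⟨hneg, fun h => by simpa using hneg h⟩⟩
  rw [add_comm]
  simpa [two_nsmul] using hLT.two_nsmul_sub_ne_bot hα (hneg hlam) hmu

/-- For a Lie `Λ`-torus `L` and a nonzero `α` in the `Q`-support, the set
`Λ_α = {λ : L_α^λ ≠ 0}` satisfies `Λ_α + 2Λ_α ⊆ Λ_α` and `-Λ_α = Λ_α`. -/
theorem stmt13 {k 𝒳 Λ L : Type*} [Field k] [CharZero k] [AddCommGroup 𝒳] [Module k 𝒳]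
    [DecidableEq 𝒳] [AddCommGroup Λ] [DecidableEq Λ] [LieRing L] [LieAlgebra k L]
    (R : RootSystemIn k 𝒳) (g : 𝒳 → Λ → Submodule k L) (hLT : IsLieTorus R g)
    (α : 𝒳) (hα : α ≠ 0) (hαsupp : ∃ lam : Λ, g α lam ≠ ⊥) :
    (∀ lam mu : Λ, g α lam ≠ ⊥ → g α mu ≠ ⊥ → g α (lam + (mu + mu)) ≠ ⊥) ∧
    (∀ lam : Λ, g α lam ≠ ⊥ ↔ g α (-lam) ≠ ⊥) :=
  stmt13_general R g hLT α hα
end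

section
/- Let L be a Lie Λ-torus and s ∈ Hom(Q,Λ) admissible for L. Then for t ∈ Hom(Q,Λ): t is admissible for the isotope L^(s) if and only if s + t is admissible for L; and in that case (L^(s))^(t) = L^(s+t). In particular, −s is admissible for L^(s) and (L^(s))^(−s) = L, so isotopy is an equivalence relation. -/
section
variable {k 𝒳 Λ L : Type*} [Field k] [CharZero k] [AddCommGroup 𝒳] [Module k 𝒳]
  [DecidableEq 𝒳] [AddCommGroup Λ] [DecidableEq Λ] [LieRing L] [LieAlgebra k L]

open Classical in
/-- The grading of the isotope `L^(s)`: `(L^(s))_α^λ = L_α^{λ + s(α)}`, for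
`s ∈ Hom(Q, Λ)` where `Q = ⟨Δ⟩` is the root lattice. -/
noncomputable def isoGrading (R : RootSystemIn k 𝒳) (g : 𝒳 → Λ → Submodule k L)
    (s : ↥(AddSubgroup.closure R.Δ) →+ Λ) : 𝒳 → Λ → Submodule k L :=
  fun α lam =>
    if h : α ∈ AddSubgroup.closure R.Δ then g α (lam + s ⟨α, h⟩) else ⊥

/-- `s ∈ Hom(Q, Λ)` is admissible for the Lie torus `L`:
`s(α) ∈ Λ_α` for every indivisible nonzero root `α`. -/
def Admissible (R : RootSystemIn k 𝒳) (g : 𝒳 → Λ → Submodule k L)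
    (s : ↥(AddSubgroup.closure R.Δ) →+ Λ) : Prop :=
  ∀ α, ∀ hα : α ∈ R.Δ, α ≠ 0 → (¬ ∃ γ ∈ R.Δ, α = (2 : k) • γ) →
    g α (s ⟨α, AddSubgroup.subset_closure hα⟩) ≠ ⊥

end

section
variable {k 𝒳 Λ L : Type*} [Field k] [AddCommGroup 𝒳] [Module k 𝒳] [AddCommGroup Λ]
  [LieRing L] [LieAlgebra k L] (R : RootSystemIn k 𝒳) (g : 𝒳 → Λ → Submodule k L)

theorem isoGrading_of_mem (s : ↥(AddSubgroup.closure R.Δ) →+ Λ) {α : 𝒳}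
    (hα : α ∈ AddSubgroup.closure R.Δ) (lam : Λ) :
    isoGrading R g s α lam = g α (lam + s ⟨α, hα⟩) :=
  dif_pos hα

theorem isoGrading_of_notMem (s : ↥(AddSubgroup.closure R.Δ) →+ Λ) {α : 𝒳}
    (hα : α ∉ AddSubgroup.closure R.Δ) (lam : Λ) :
    isoGrading R g s α lam = ⊥ :=
  dif_neg hα

theorem isoGrading_isoGrading (s t : ↥(AddSubgroup.closure R.Δ) →+ Λ) :
    isoGrading R (isoGrading R g s) t = isoGrading R g (s + t) := by
  funext α lam
  by_cases hα : α ∈ AddSubgroup.closure R.Δ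
  · rw [isoGrading_of_mem _ _ _ hα, isoGrading_of_mem _ _ _ hα, isoGrading_of_mem _ _ _ hα,
      AddMonoidHom.add_apply, add_assoc, add_comm (t _)]
  · rw [isoGrading_of_notMem _ _ _ hα, isoGrading_of_notMem _ _ _ hα]

theorem isoGrading_zero (hg : ∀ α lam, g α lam ≠ ⊥ → α ∈ AddSubgroup.closure R.Δ) :
    isoGrading R g 0 = g := by
  funext α lam
  by_cases hα : α ∈ AddSubgroup.closure R.Δ
  · rw [isoGrading_of_mem _ _ _ hα, AddMonoidHom.zero_apply, add_zero]
  · rw [isoGrading_of_notMem _ _ _ hα]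
    by_contra hne
    exact hα (hg α lam (Ne.symm hne))

theorem admissible_isoGrading_iff (s t : ↥(AddSubgroup.closure R.Δ) →+ Λ) :
    Admissible R (isoGrading R g s) t ↔ Admissible R g (s + t) := by
  refine forall₄_congr fun α hα _ _ => ?_
  rw [isoGrading_of_mem _ _ _ (AddSubgroup.subset_closure hα), AddMonoidHom.add_apply, add_comm]

theorem IsLieTorus.admissible_zero [DecidableEq 𝒳] [DecidableEq Λ] {R : RootSystemIn k 𝒳}
    {g : 𝒳 → Λ → Submodule k L}
    (hLT : IsLieTorus R g) : Admissible R g 0 :=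
  hLT.lt2i

end

section
variable {k 𝒳 Λ L : Type*} [Field k] [CharZero k] [AddCommGroup 𝒳] [Module k 𝒳]
  [DecidableEq 𝒳] [AddCommGroup Λ] [DecidableEq Λ] [LieRing L] [LieAlgebra k L]

theorem stmt16_general (R : RootSystemIn k 𝒳) (g : 𝒳 → Λ → Submodule k L)
    (hLT : IsLieTorus R g) (s : ↥(AddSubgroup.closure R.Δ) →+ Λ) :
    (∀ t : ↥(AddSubgroup.closure R.Δ) →+ Λ,
      Admissible R (isoGrading R g s) t ↔ Admissible R g (s + t)) ∧
    (∀ t : ↥(AddSubgroup.closure R.Δ) →+ Λ,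
      Admissible R (isoGrading R g s) t →
        isoGrading R (isoGrading R g s) t = isoGrading R g (s + t)) ∧
    Admissible R (isoGrading R g s) (-s) ∧
    isoGrading R (isoGrading R g s) (-s) = g := by
  refine ⟨admissible_isoGrading_iff R g s, fun t _ => isoGrading_isoGrading R g s t, ?_, ?_⟩
  · rw [admissible_isoGrading_iff, add_neg_cancel]
    exact hLT.admissible_zero
  · rw [isoGrading_isoGrading, add_neg_cancel]
    exact isoGrading_zero R g fun α lam h =>
      AddSubgroup.subset_closure (hLT.supp_subset α lam h)

/-- For `s` admissible for the Lie torus `L`: `t` is admissible for the isotope `L^(s)` iff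
`s + t` is admissible for `L`, in which case `(L^(s))^(t) = L^(s+t)`; in particular `-s` is
admissible for `L^(s)` and `(L^(s))^(-s) = L`. -/
theorem stmt16 (R : RootSystemIn k 𝒳) (g : 𝒳 → Λ → Submodule k L)
    (hLT : IsLieTorus R g) (s : ↥(AddSubgroup.closure R.Δ) →+ Λ)
    (hs : Admissible R g s) :
    (∀ t : ↥(AddSubgroup.closure R.Δ) →+ Λ,
      Admissible R (isoGrading R g s) t ↔ Admissible R g (s + t)) ∧
    (∀ t : ↥(AddSubgroup.closure R.Δ) →+ Λ,
      Admissible R (isoGrading R g s) t →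
        isoGrading R (isoGrading R g s) t = isoGrading R g (s + t)) ∧
    Admissible R (isoGrading R g s) (-s) ∧
    isoGrading R (isoGrading R g s) (-s) = g :=
  stmt16_general R g hLT s

end
end

section
/- Let β be a short root of Δ and L a Lie Λ-torus of type Δ. Then supp_Λ(L) = Λ_0 = Λ_β + Λ_β, Λ = ⟨Λ_β⟩, Λ_β + 2Λ ⊆ Λ_β, and 2Λ ⊆ Λ_β; in particular 2Λ ⊆ supp_Λ(L). -/
namespace RootSystemIn

variable {k 𝒳 : Type*} [Field k] [AddCommGroup 𝒳] [Module k 𝒳]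

def reflection (R : RootSystemIn k 𝒳) (α : 𝒳) : Module.End k 𝒳 :=
  Module.preReflection α (R.coroot α)

variable {R : RootSystemIn k 𝒳} {α β γ δ ξ o : 𝒳}

lemma reflection_apply (x : 𝒳) : R.reflection α x = x - R.coroot α x • α := rfl

lemma coroot_apply_self (hα : α ∈ R.Δ) (hα0 : α ≠ 0) : R.coroot α α = 2 :=
  (R.isCoroot α hα hα0).1

lemma reflection_mem (hα : α ∈ R.Δ) (hα0 : α ≠ 0) (hγ : γ ∈ R.Δ) : R.reflection α γ ∈ R.Δ :=
  (R.isCoroot α hα hα0).2 γ hγ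

lemma reflection_reflection (hα : α ∈ R.Δ) (hα0 : α ≠ 0) (x : 𝒳) :
    R.reflection α (R.reflection α x) = x :=
  Module.involutive_preReflection (coroot_apply_self hα hα0) x

lemma reflection_ne_zero (hα : α ∈ R.Δ) (hα0 : α ≠ 0) (hγ0 : γ ≠ 0) : R.reflection α γ ≠ 0 :=
  fun h => hγ0 <| by rw [← reflection_reflection hα hα0 γ, h, map_zero]

lemma reflection_self (hα : α ∈ R.Δ) (hα0 : α ≠ 0) : R.reflection α α = -α :=
  Module.preReflection_apply_self (coroot_apply_self hα hα0)

lemma neg_mem (hα : α ∈ R.Δ) (hα0 : α ≠ 0) : -α ∈ R.Δ :=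
  reflection_self hα hα0 ▸ reflection_mem hα hα0 hα

def weylOrbit (R : RootSystemIn k 𝒳) (β : 𝒳) : Set 𝒳 :=
  {o | Relation.ReflTransGen (fun x y => ∃ α ∈ R.Δ, α ≠ 0 ∧ y = R.reflection α x) β o}

lemma self_mem_weylOrbit : β ∈ R.weylOrbit β := Relation.ReflTransGen.refl

lemma reflection_mem_weylOrbit (ho : o ∈ R.weylOrbit β) (hα : α ∈ R.Δ) (hα0 : α ≠ 0) :
    R.reflection α o ∈ R.weylOrbit β :=
  Relation.ReflTransGen.tail ho ⟨α, hα, hα0, rfl⟩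

lemma weylOrbit_induction {P : 𝒳 → Prop} (h0 : P β)
    (hP : ∀ x α, P x → α ∈ R.Δ → α ≠ 0 → P (R.reflection α x)) (ho : o ∈ R.weylOrbit β) :
    P o := by
  induction ho with
  | refl => exact h0
  | tail _ hxy ih =>
    obtain ⟨α, hα, hα0, rfl⟩ := hxy
    exact hP _ α ih hα hα0

lemma mem_of_mem_weylOrbit (hβ : β ∈ R.Δ) (hβ0 : β ≠ 0) (ho : o ∈ R.weylOrbit β) :
    o ∈ R.Δ ∧ o ≠ 0 :=
  weylOrbit_induction (P := fun x => x ∈ R.Δ ∧ x ≠ 0) ⟨hβ, hβ0⟩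
    (fun _ _ hx hα hα0 => ⟨reflection_mem hα hα0 hx.1, reflection_ne_zero hα hα0 hx.2⟩) ho

lemma neg_mem_weylOrbit (hβ : β ∈ R.Δ) (hβ0 : β ≠ 0) (ho : o ∈ R.weylOrbit β) :
    -o ∈ R.weylOrbit β := by
  obtain ⟨hoΔ, ho0⟩ := mem_of_mem_weylOrbit hβ hβ0 ho
  simpa [reflection_self hoΔ ho0] using reflection_mem_weylOrbit ho hoΔ ho0

section CharZero

variable [CharZero k]

lemma coroot_eq_of_mapsTo (hα : α ∈ R.Δ) (hα0 : α ≠ 0) {G : Module.Dual k 𝒳} (hG : G α = 2)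
    (hGΔ : ∀ x ∈ R.Δ, x - G x • α ∈ R.Δ) : R.coroot α = G :=
  Module.Dual.eq_of_preReflection_mapsTo R.finite R.span_eq (coroot_apply_self hα hα0)
    (fun _ hx => reflection_mem hα hα0 hx) hG hGΔ

lemma coroot_smul {c : k} (hc : c ≠ 0) (hα : α ∈ R.Δ) (hα0 : α ≠ 0) (hcα : c • α ∈ R.Δ) :
    R.coroot (c • α) = c⁻¹ • R.coroot α := by
  refine coroot_eq_of_mapsTo hcα (smul_ne_zero hc hα0) ?_ fun x hx => ?_
  · rw [LinearMap.smul_apply, map_smul, coroot_apply_self hα hα0, smul_smul, inv_mul_cancel₀ hc,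
      one_smul]
  · rw [LinearMap.smul_apply, smul_smul, smul_eq_mul, mul_right_comm, inv_mul_cancel₀ hc, one_mul]
    exact reflection_mem hα hα0 hx

lemma reflection_smul {c : k} (hc : c ≠ 0) (hα : α ∈ R.Δ) (hα0 : α ≠ 0) (hcα : c • α ∈ R.Δ) :
    R.reflection (c • α) = R.reflection α := by
  ext x
  rw [reflection_apply, reflection_apply, coroot_smul hc hα hα0 hcα, LinearMap.smul_apply,
    smul_smul, smul_eq_mul, mul_right_comm, inv_mul_cancel₀ hc, one_mul]

lemma coroot_neg (hα : α ∈ R.Δ) (hα0 : α ≠ 0) : R.coroot (-α) = -R.coroot α := by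
  have := coroot_smul (c := -1) (neg_ne_zero.2 one_ne_zero) hα hα0 (by simpa using neg_mem hα hα0)
  ext x
  simpa using LinearMap.congr_fun this x

/-- Halving a root as long as the result is still a root terminates, since `Δ` is finite. -/
lemma exists_indivisible_reflection_eq (hα : α ∈ R.Δ) (hα0 : α ≠ 0) :
    ∃ α' ∈ R.Δ, α' ≠ 0 ∧ (¬ ∃ ρ ∈ R.Δ, α' = (2 : k) • ρ) ∧ R.reflection α' = R.reflection α := by
  set f : ℕ → 𝒳 := fun n => ((2 : k) ^ n)⁻¹ • α
  have hf : Function.Injective f := fun m n h =>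
    Nat.pow_right_injective le_rfl <| by exact_mod_cast inv_injective (smul_left_injective k hα0 h)
  obtain ⟨n, hn⟩ := (R.finite.preimage hf.injOn).exists_maximal ⟨0, by simpa [f] using hα⟩
  have hc : ((2 : k) ^ n)⁻¹ ≠ 0 := by simp
  refine ⟨f n, hn.prop, smul_ne_zero hc hα0, ?_, reflection_smul hc hα hα0 hn.prop⟩
  rintro ⟨ρ, hρ, hfρ⟩
  have : f (n + 1) = ρ := by
    rw [← inv_smul_smul₀ (two_ne_zero (α := k)) ρ, ← hfρ]
    simp only [f, smul_smul, pow_succ, mul_inv]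
    rw [mul_comm]
  exact absurd (hn.2 (this ▸ hρ : f (n + 1) ∈ R.Δ)) (by omega)

lemma coroot_reflection (hα : α ∈ R.Δ) (hα0 : α ≠ 0) (hγ : γ ∈ R.Δ) (hγ0 : γ ≠ 0) :
    R.coroot (R.reflection α γ) = R.coroot γ ∘ₗ R.reflection α := by
  refine coroot_eq_of_mapsTo (reflection_mem hα hα0 hγ) (reflection_ne_zero hα hα0 hγ0) ?_
    fun x hx => ?_
  · rw [LinearMap.comp_apply, reflection_reflection hα hα0, coroot_apply_self hγ hγ0]
  · have key : x - (R.coroot γ ∘ₗ R.reflection α) x • R.reflection α γ =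
        R.reflection α (R.reflection γ (R.reflection α x)) := by
      simp only [LinearMap.comp_apply, reflection_apply (α := γ), map_sub, map_smul,
        reflection_reflection hα hα0]
    rw [key]
    exact reflection_mem hα hα0 (reflection_mem hγ hγ0 (reflection_mem hα hα0 hx))

/-- Irreducibility: the roots pairing trivially with the whole orbit of `β` are orthogonal to
all the others, so they form an empty component. -/
lemma exists_mem_weylOrbit_coroot_ne_zero (hβ : β ∈ R.Δ) (hβ0 : β ≠ 0) (hξ : ξ ∈ R.Δ)
    (hξ0 : ξ ≠ 0) : ∃ o ∈ R.weylOrbit β, R.coroot ξ o ≠ 0 := by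
  by_contra! hξorth
  set A := {γ ∈ R.Δ \ {0} | ∃ o ∈ R.weylOrbit β, R.coroot γ o ≠ 0}
  set B := {γ ∈ R.Δ \ {0} | ∀ o ∈ R.weylOrbit β, R.coroot γ o = 0}
  have hAB : A ∪ B = R.Δ \ {0} := by
    ext γ
    by_cases h : ∀ o ∈ R.weylOrbit β, R.coroot γ o = 0 <;> simp_all [A, B]
  have hAB' : A ∩ B = ∅ := by
    ext γ
    simp only [A, B, Set.mem_inter_iff, Set.mem_ofPred_eq, Set.mem_empty_iff_false, iff_false]
    rintro ⟨⟨-, o, ho, hγo⟩, -, hγ⟩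
    exact hγo (hγ o ho)
  have horth : ∀ p ∈ A, ∀ q ∈ B, R.coroot q p = 0 := by
    rintro p ⟨hp, o, ho, hpo⟩ q ⟨-, hq⟩
    have hp0 : p ≠ 0 := hp.2
    have := hq _ (reflection_mem_weylOrbit ho hp.1 hp0)
    rw [reflection_apply, map_sub, map_smul, hq o ho, smul_eq_mul, zero_sub, neg_eq_zero] at this
    exact (mul_eq_zero.1 this).resolve_left hpo
  rcases R.irreducible A B hAB hAB' horth with hA | hB
  · refine hA.subset ⟨⟨hβ, hβ0⟩, β, self_mem_weylOrbit, ?_⟩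
    simp [coroot_apply_self hβ hβ0]
  · exact hB.subset ⟨⟨hξ, hξ0⟩, hξorth⟩

end CharZero

structure IsInvariantForm (R : RootSystemIn k 𝒳) (B : 𝒳 → 𝒳 → k) : Prop where
  symm : ∀ x y, B x y = B y x
  ne_zero : ∀ α ∈ R.Δ, α ≠ 0 → B α α ≠ 0
  mul_coroot : ∀ α ∈ R.Δ, α ≠ 0 → ∀ x, B α α * R.coroot α x = 2 * B x α

/-- `β` has minimal `B`-length among the roots, all length ratios being rational. -/
structure IsShortRoot (R : RootSystemIn k 𝒳) (B : 𝒳 → 𝒳 → k) (β : 𝒳) : Prop where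
  mem : β ∈ R.Δ
  ne_zero : β ≠ 0
  exists_le : ∀ α ∈ R.Δ, α ≠ 0 → ∃ c : ℚ, 1 ≤ c ∧ B α α = c * B β β

namespace IsInvariantForm

variable {B : 𝒳 → 𝒳 → k} (hB : R.IsInvariantForm B)
include hB

lemma mul_coroot_comm (hγ : γ ∈ R.Δ) (hγ0 : γ ≠ 0) (hδ : δ ∈ R.Δ) (hδ0 : δ ≠ 0) :
    B γ γ * R.coroot γ δ = B δ δ * R.coroot δ γ := by
  rw [hB.mul_coroot γ hγ hγ0, hB.mul_coroot δ hδ hδ0, hB.symm]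

variable [CharZero k]

lemma apply_reflection_self (hα : α ∈ R.Δ) (hα0 : α ≠ 0) (hγ : γ ∈ R.Δ) (hγ0 : γ ≠ 0) :
    B (R.reflection α γ) (R.reflection α γ) = B γ γ := by
  by_cases hαγ : R.coroot α γ = 0
  · simp [reflection_apply, hαγ]
  have hγα : R.coroot γ α ≠ 0 := by
    intro h
    have := hB.mul_coroot_comm hα hα0 hγ hγ0
    rw [h, mul_zero] at this
    exact mul_ne_zero (hB.ne_zero α hα hα0) hαγ this
  have h1 := hB.mul_coroot_comm (reflection_mem hα hα0 hγ) (reflection_ne_zero hα hα0 hγ0) hα hα0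
  have h2 := hB.mul_coroot_comm hγ hγ0 hα hα0
  have hδα : R.coroot (R.reflection α γ) α = -R.coroot γ α := by
    rw [coroot_reflection hα hα0 hγ hγ0, LinearMap.comp_apply, reflection_self hα hα0, map_neg]
  have hαδ : R.coroot α (R.reflection α γ) = -R.coroot α γ := by
    rw [reflection_apply, map_sub, map_smul, coroot_apply_self hα hα0, smul_eq_mul]
    ring
  rw [hδα, hαδ] at h1
  apply mul_right_cancel₀ hγα
  linear_combination -h1 - h2

lemma apply_add_self {a b : 𝒳} (ha : a ∈ R.Δ) (ha0 : a ≠ 0) (hb : b ∈ R.Δ) (hb0 : b ≠ 0)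
    (hab : a + b ∈ R.Δ) (hab0 : a + b ≠ 0) :
    B (a + b) (a + b) = B a a + B b b + B a a * R.coroot a b := by
  have h1 := hB.mul_coroot_comm hab hab0 ha ha0
  have h2 := hB.mul_coroot_comm hab hab0 hb hb0
  have h3 := hB.mul_coroot_comm ha ha0 hb hb0
  have h4 := coroot_apply_self hab hab0
  rw [map_add, coroot_apply_self ha ha0] at h1
  rw [map_add, coroot_apply_self hb hb0] at h2
  rw [map_add] at h4
  linear_combination (h1 + h2 - h3 - B (a + b) (a + b) * h4) / 2

lemma apply_self_of_mem_weylOrbit (hβ : β ∈ R.Δ) (hβ0 : β ≠ 0) (ho : o ∈ R.weylOrbit β) :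
    B o o = B β β :=
  (weylOrbit_induction (P := fun x => (x ∈ R.Δ ∧ x ≠ 0) ∧ B x x = B β β) ⟨⟨hβ, hβ0⟩, rfl⟩
    (fun _ _ ⟨⟨hx, hx0⟩, hxB⟩ hα hα0 => ⟨⟨reflection_mem hα hα0 hx, reflection_ne_zero hα hα0 hx0⟩,
      (hB.apply_reflection_self hα hα0 hx hx0).trans hxB⟩) ho).2

end IsInvariantForm

namespace IsShortRoot

variable {B : 𝒳 → 𝒳 → k} [CharZero k] (hB : R.IsInvariantForm B) (hβ : R.IsShortRoot B β)
include hB hβ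

lemma ratio_injective {q r : ℚ} (h : (q : k) * B β β = r * B β β) : q = r :=
  Rat.cast_injective (mul_right_cancel₀ (hB.ne_zero β hβ.mem hβ.ne_zero) h)

lemma not_exists_eq_two_smul (hγ : γ ∈ R.Δ) (hγ0 : γ ≠ 0) (hγβ : B γ γ = B β β) :
    ¬ ∃ ρ ∈ R.Δ, γ = (2 : k) • ρ := by
  rintro ⟨ρ, hρ, rfl⟩
  have hρ0 : ρ ≠ 0 := by rintro rfl; simp at hγ0
  obtain ⟨c, hc, hρβ⟩ := hβ.exists_le ρ hρ hρ0
  have hγρ : R.coroot ((2 : k) • ρ) ρ = 1 := by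
    have := coroot_apply_self hγ hγ0
    rw [map_smul, smul_eq_mul] at this
    linear_combination this / 2
  have h := hB.mul_coroot_comm hγ hγ0 hρ hρ0
  rw [hγρ, hγβ, hρβ, map_smul, coroot_apply_self hρ hρ0, smul_eq_mul] at h
  have : (1 : ℚ) = 4 * c := hβ.ratio_injective hB (by push_cast; linear_combination h)
  linarith

lemma coroot_eq_neg_one {a b : 𝒳} (ha : a ∈ R.Δ) (ha0 : a ≠ 0) (hb : b ∈ R.Δ) (hb0 : b ≠ 0)
    (hbβ : B b b = B β β) (hab : a + b ∈ R.Δ) (hab0 : a + b ≠ 0) {n : ℕ}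
    (hn : R.coroot a b = -n) (hn1 : 1 ≤ n) : R.coroot a b = -1 := by
  obtain ⟨c, hc, haβ⟩ := hβ.exists_le a ha ha0
  obtain ⟨d, hd, habβ⟩ := hβ.exists_le (a + b) hab hab0
  have h := hB.apply_add_self ha ha0 hb hb0 hab hab0
  rw [habβ, haβ, hbβ, hn] at h
  have : d = c + 1 - c * n := hβ.ratio_injective hB (by push_cast; linear_combination h)
  have hn' : (n : ℚ) = 1 := by
    have : (1 : ℚ) ≤ n := by exact_mod_cast hn1
    nlinarith
  rw [hn, show (n : k) = 1 by exact_mod_cast hn']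

end IsShortRoot

end RootSystemIn

open LieModule

namespace IsSl2Triple

variable {R L M : Type*} [CommRing R] [LieRing L] [LieAlgebra R L]
  [AddCommGroup M] [Module R M] [LieRingModule L M] [LieModule R L M]
  {h e f : L} {m : M} {μ : R}

lemma lie_h_pow_toEnd_f_of_lie_h (t : IsSl2Triple h e f) (hm : ⁅h, m⁆ = μ • m) (n : ℕ) :
    ⁅h, (toEnd R L M f ^ n) m⁆ = (μ - 2 * n) • (toEnd R L M f ^ n) m := by
  have := t.symm.lie_h_pow_toEnd_e (M := M) (μ := -μ) (by rw [neg_lie, hm, neg_smul]) n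
  rw [neg_lie, neg_eq_iff_eq_neg, ← neg_smul] at this
  rw [this]; congr 1; ring

lemma lie_e_pow_succ_toEnd_f_of_lie_h (t : IsSl2Triple h e f) (hm : ⁅h, m⁆ = μ • m) (n : ℕ) :
    ⁅e, (toEnd R L M f ^ (n + 1)) m⁆ =
      (toEnd R L M f ^ (n + 1)) ⁅e, m⁆ + ((n + 1) * (μ - n)) • (toEnd R L M f ^ n) m := by
  induction n with
  | zero => simp [leibniz_lie e, t.lie_e_f, hm, add_comm]
  | succ n ih =>
    have hf : ∀ j : ℕ, ⁅f, (toEnd R L M f ^ j) m⁆ = (toEnd R L M f ^ (j + 1)) m := fun j => by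
      rw [pow_succ', Module.End.mul_apply, toEnd_apply_apply]
    rw [← hf, leibniz_lie e, t.lie_e_f, t.lie_h_pow_toEnd_f_of_lie_h hm, ih, lie_add, lie_smul, hf,
      pow_succ' _ (n + 1), Module.End.mul_apply, toEnd_apply_apply]
    push_cast
    rw [add_left_comm, ← add_smul]
    congr 2
    ring

/-- Induction on the nilpotency order of `e` at `m`: `⁅e, m⁆` has weight `n + 2`, and by the
commutation formula `f ^ n m = 0` would force `f ^ (n + 2) ⁅e, m⁆ = 0`. -/
lemma pow_toEnd_f_ne_zero_of_lie_h [IsDomain R] [CharZero R] [Module.IsTorsionFree R M]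
    (t : IsSl2Triple h e f) {n : ℕ} (hm : ⁅h, m⁆ = (n : R) • m) (hm0 : m ≠ 0)
    (hnil : ∃ N, (toEnd R L M e ^ N) m = 0) : (toEnd R L M f ^ n) m ≠ 0 := by
  obtain ⟨N, hN⟩ := hnil
  induction N generalizing m n with
  | zero => simp_all
  | succ N ih =>
    by_cases he : ⁅e, m⁆ = 0
    · exact (HasPrimitiveVectorWith.mk hm0 hm he (t := t)).pow_toEnd_f_ne_zero_of_eq_nat rfl le_rfl
    intro hfn
    have hem : ⁅h, ⁅e, m⁆⁆ = ((n + 2 : ℕ) : R) • ⁅e, m⁆ := by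
      rw [leibniz_lie, t.lie_h_e_smul R, hm, smul_lie, lie_smul, ← add_smul]; push_cast; ring_nf
    refine ih hem he (by rwa [← toEnd_apply_apply R, ← Module.End.mul_apply, ← pow_succ]) ?_
    have hfn1 : (toEnd R L M f ^ (n + 1)) m = 0 := by
      rw [pow_succ', Module.End.mul_apply, hfn, map_zero]
    have hfn2 : (toEnd R L M f ^ (n + 2)) m = 0 := by
      rw [pow_succ', Module.End.mul_apply, hfn1, map_zero]
    simpa [hfn1, hfn2] using (t.lie_e_pow_succ_toEnd_f_of_lie_h hm (n + 1)).symm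

end IsSl2Triple

theorem LieSubalgebra.coe_lieSpan_eq_span_of_forall_lie_mem {R L : Type*} [CommRing R] [LieRing L]
    [LieAlgebra R L] {s : Set L} (hs : ∀ x ∈ s, ∀ y ∈ s, ⁅x, y⁆ ∈ Submodule.span R s) :
    (LieSubalgebra.lieSpan R L s : Submodule R L) = Submodule.span R s := by
  suffices ∀ {x y}, x ∈ Submodule.span R s → y ∈ Submodule.span R s →
      ⁅x, y⁆ ∈ Submodule.span R s by
    refine le_antisymm ?_ LieSubalgebra.submodule_span_le_lieSpan
    change _ ≤ ({ Submodule.span R s with lie_mem' := this } : LieSubalgebra R L)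
    exact LieSubalgebra.lieSpan_le.2 Submodule.subset_span
  intro x y hx hy
  induction hx, hy using Submodule.span_induction₂ with
  | mem_mem x y hx hy => exact hs x hx y hy
  | zero_left y hy => simp
  | zero_right x hx => simp
  | add_left x y z _ _ _ hx hy => simpa using add_mem hx hy
  | add_right x y z _ _ _ hx hy => simpa using add_mem hx hy
  | smul_left r x y _ _ h => simpa using Submodule.smul_mem _ r h
  | smul_right r x y _ _ h => simpa using Submodule.smul_mem _ r h

namespace IsLieTorus

open RootSystemIn

variable {k 𝒳 Λ L : Type*} [Field k] [AddCommGroup 𝒳] [Module k 𝒳]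
    [DecidableEq 𝒳] [AddCommGroup Λ] [DecidableEq Λ] [LieRing L] [LieAlgebra k L]
    {R : RootSystemIn k 𝒳} {g : 𝒳 → Λ → Submodule k L} (hLT : IsLieTorus R g)
    {α β γ o : 𝒳} {lam μ : Λ}
include hLT

lemma toEnd_pow_mem {e x : L} (he : e ∈ g α lam) (hx : x ∈ g γ μ) (n : ℕ) :
    (toEnd k L L e ^ n) x ∈ g (γ + n • α) (μ + n • lam) := by
  induction n with
  | zero => simpa using hx
  | succ n ih =>
    rw [pow_succ', Module.End.mul_apply, toEnd_apply_apply, succ_nsmul', succ_nsmul',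
      add_left_comm γ, add_left_comm μ]
    exact hLT.bracket_mem _ _ _ _ e he _ ih

/-- By (LT3), as this span is closed under the bracket: `L_0` normalizes both generating sets. -/
lemma span_eq_top : Submodule.span k ({x | ∃ γ ≠ 0, ∃ μ, x ∈ g γ μ} ∪
    {w | ∃ γ ≠ 0, ∃ μ ν, ∃ y ∈ g γ μ, ∃ z ∈ g (-γ) ν, w = ⁅y, z⁆}) = ⊤ := by
  set S₁ := {x | ∃ γ ≠ 0, ∃ μ, x ∈ g γ μ}
  set S₂ := {w | ∃ γ ≠ 0, ∃ μ ν, ∃ y ∈ g γ μ, ∃ z ∈ g (-γ) ν, w = ⁅y, z⁆}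
  have hS₂ : ∀ w ∈ S₂, ∃ ρ, w ∈ g 0 ρ := by
    rintro _ ⟨γ, -, μ, ν, y, hy, z, hz, rfl⟩
    exact ⟨μ + ν, add_neg_cancel γ ▸ hLT.bracket_mem _ _ _ _ y hy z hz⟩
  have hS₁ : ∀ w ρ, w ∈ g 0 ρ → ∀ x ∈ S₁, ⁅w, x⁆ ∈ S₁ := by
    rintro w ρ hw x ⟨γ, hγ0, μ, hx⟩
    exact ⟨γ, hγ0, ρ + μ, zero_add γ ▸ hLT.bracket_mem _ _ _ _ w hw x hx⟩
  have hS₂' : ∀ w ρ, w ∈ g 0 ρ → ∀ x ∈ S₂, ⁅w, x⁆ ∈ Submodule.span k (S₁ ∪ S₂) := by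
    rintro w ρ hw _ ⟨γ, hγ0, μ, ν, y, hy, z, hz, rfl⟩
    rw [leibniz_lie]
    refine add_mem (Submodule.subset_span (Or.inr ?_)) (Submodule.subset_span (Or.inr ?_))
    · exact ⟨γ, hγ0, ρ + μ, ν, _, zero_add γ ▸ hLT.bracket_mem _ _ _ _ w hw y hy, z, hz, rfl⟩
    · exact ⟨γ, hγ0, μ, ρ + ν, y, hy, _, zero_add (-γ) ▸ hLT.bracket_mem _ _ _ _ w hw z hz, rfl⟩
  have hclosed : ∀ x ∈ S₁ ∪ S₂, ∀ y ∈ S₁ ∪ S₂, ⁅x, y⁆ ∈ Submodule.span k (S₁ ∪ S₂) := by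
    rintro x (⟨γ, hγ0, μ, hx⟩ | hx) y (⟨γ', hγ'0, μ', hy⟩ | hy)
    · refine Submodule.subset_span ?_
      by_cases hγγ' : γ + γ' = 0
      · rw [← neg_eq_of_add_eq_zero_right hγγ'] at hy
        exact Or.inr ⟨γ, hγ0, μ, μ', x, hx, y, hy, rfl⟩
      · exact Or.inl ⟨γ + γ', hγγ', μ + μ', hLT.bracket_mem _ _ _ _ x hx y hy⟩
    · obtain ⟨ρ, hy₀⟩ := hS₂ y hy
      rw [← lie_skew]
      exact neg_mem (Submodule.subset_span (Or.inl (hS₁ y ρ hy₀ x ⟨γ, hγ0, μ, hx⟩)))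
    · obtain ⟨ρ, hx₀⟩ := hS₂ x hx
      exact Submodule.subset_span (Or.inl (hS₁ x ρ hx₀ y ⟨γ', hγ'0, μ', hy⟩))
    · obtain ⟨ρ, hx₀⟩ := hS₂ x hx
      exact hS₂' x ρ hx₀ y hy
  rw [eq_top_iff, ← LieSubalgebra.coe_lieSpan_eq_span_of_forall_lie_mem hclosed]
  refine fun x _ => LieSubalgebra.lieSpan_mono ?_ (hLT.lt3 ▸ LieSubalgebra.mem_top x)
  simp only [Set.subset_def, Set.mem_iUnion]
  exact fun x ⟨γ, hγ, μ, hx⟩ => Or.inl ⟨γ, hγ.2, μ, hx⟩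

/-- `L_0 = ∑_{γ ≠ 0} [L_γ, L_{-γ}]`, read off in degree `lam`. -/
lemma exists_ne_bot_of_zero (h : g 0 lam ≠ ⊥) :
    ∃ γ ≠ 0, ∃ μ ν, g γ μ ≠ ⊥ ∧ g (-γ) ν ≠ ⊥ ∧ μ + ν = lam := by
  by_contra! hlam
  set V := ⨆ p ∈ {p : 𝒳 × Λ | p ≠ (0, lam)}, g p.1 p.2
  have hV : ∀ {γ μ x}, x ∈ g γ μ → (γ, μ) ≠ (0, lam) → x ∈ V := fun hx hp =>
    Submodule.mem_iSup_of_mem _ (Submodule.mem_iSup_of_mem hp hx)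
  have hV' : ⊤ ≤ V := by
    refine hLT.span_eq_top ▸ Submodule.span_le.2 ?_
    rintro _ (⟨γ, hγ0, μ, hx⟩ | ⟨γ, hγ0, μ, ν, y, hy, z, hz, rfl⟩)
    · exact hV hx fun h => hγ0 (congrArg Prod.fst h)
    by_cases hμν : μ + ν = lam
    · have : y = 0 ∨ z = 0 := by
        by_contra! hyz
        exact hlam γ hγ0 μ ν ((Submodule.ne_bot_iff _).2 ⟨y, hy, hyz.1⟩)
          ((Submodule.ne_bot_iff _).2 ⟨z, hz, hyz.2⟩) hμν
      rcases this with rfl | rfl <;> simp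
    · exact hV (add_neg_cancel γ ▸ hLT.bracket_mem _ _ _ _ y hy z hz)
        fun h => hμν (congrArg Prod.snd h)
  have hdisj : Disjoint (g 0 lam) V :=
    hLT.isInternal.submodule_iSupIndep.disjoint_biSup (x := ((0 : 𝒳), lam)) (by simp)
  exact h (hdisj.eq_bot_of_le (le_top.trans hV'))

variable [CharZero k]

/-- The degrees `γ + N • α` are pairwise distinct, and only finitely many of them are roots. -/
lemma exists_toEnd_pow_eq_zero (hα0 : α ≠ 0) {e x : L} (he : e ∈ g α lam) (hx : x ∈ g γ μ) :
    ∃ N, (toEnd k L L e ^ N) x = 0 := by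
  have hinj : Function.Injective fun n : ℕ => γ + n • α := fun m n h => by
    have : (m : k) • α = (n : k) • α := by simpa [Nat.cast_smul_eq_nsmul] using h
    exact Nat.cast_injective (smul_left_injective k hα0 this)
  obtain ⟨N, hN⟩ : ∃ N : ℕ, γ + N • α ∉ R.Δ := by
    by_contra! h
    exact Set.infinite_of_injective_forall_mem hinj h R.finite
  refine ⟨N, by_contra fun h => hN (hLT.supp_subset _ (μ + N • lam) ?_)⟩
  exact (Submodule.ne_bot_iff _).2 ⟨_, hLT.toEnd_pow_mem he hx N, h⟩

lemma exists_isSl2Triple_s19 (hα0 : α ≠ 0) (hα : g α lam ≠ ⊥) :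
    ∃ e ∈ g α lam, ∃ f ∈ g (-α) (-lam), IsSl2Triple ⁅e, f⁆ e f ∧
      ∀ δ ν, ∀ y ∈ g δ ν, ⁅⁅e, f⁆, y⁆ = R.coroot α δ • y := by
  obtain ⟨e, f, he, hf, hspan, -, hact⟩ := hLT.lt2ii α lam hα0 hα
  have h2 := coroot_apply_self (hLT.supp_subset α lam hα) hα0
  have he0 : e ≠ 0 := by rintro rfl; simp [hspan] at hα
  have hhe : ⁅⁅e, f⁆, e⁆ = (2 : k) • e := by rw [hact α lam e he, h2]
  refine ⟨e, he, f, hf, ⟨fun h => ?_, rfl, by rw [hhe, ofNat_smul_eq_nsmul], ?_⟩, hact⟩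
  · rw [h, zero_lie, eq_comm, smul_eq_zero] at hhe
    exact he0 (hhe.resolve_left two_ne_zero)
  · rw [hact _ _ f hf, map_neg, h2, neg_smul, ofNat_smul_eq_nsmul]

lemma ne_bot_neg_neg (hα0 : α ≠ 0) (hα : g α lam ≠ ⊥) : g (-α) (-lam) ≠ ⊥ := by
  obtain ⟨e, -, f, hf, ht, -⟩ := hLT.exists_isSl2Triple_s19 hα0 hα
  exact (Submodule.ne_bot_iff _).2 ⟨f, hf, ht.f_ne_zero⟩

lemma ne_bot_sub_nsmul (hα0 : α ≠ 0) (hα : g α lam ≠ ⊥) (hγ : g γ μ ≠ ⊥) {n : ℕ}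
    (hn : R.coroot α γ = n) {i : ℕ} (hi : i ≤ n) : g (γ - i • α) (μ - i • lam) ≠ ⊥ := by
  obtain ⟨e, he, f, hf, ht, hact⟩ := hLT.exists_isSl2Triple_s19 hα0 hα
  obtain ⟨x, hx, hx0⟩ := (Submodule.ne_bot_iff _).1 hγ
  have hfn := ht.pow_toEnd_f_ne_zero_of_lie_h (by rw [hact γ μ x hx, hn]) hx0
    (hLT.exists_toEnd_pow_eq_zero hα0 he hx)
  have hfi : (toEnd k L L f ^ i) x ≠ 0 := fun h => hfn <| by
    rw [← Nat.sub_add_cancel hi, pow_add, Module.End.mul_apply, h, map_zero]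
  refine (Submodule.ne_bot_iff _).2 ⟨_, ?_, hfi⟩
  simpa [sub_eq_add_neg] using hLT.toEnd_pow_mem hf hx i

lemma ne_bot_add_nsmul (hα0 : α ≠ 0) (hα : g α lam ≠ ⊥) (hγ : g γ μ ≠ ⊥) {n : ℕ}
    (hn : R.coroot α γ = -n) {i : ℕ} (hi : i ≤ n) : g (γ + i • α) (μ + i • lam) ≠ ⊥ := by
  have hn' : R.coroot (-α) γ = n := by
    rw [coroot_neg (hLT.supp_subset α lam hα) hα0, LinearMap.neg_apply, hn, neg_neg]
  simpa using hLT.ne_bot_sub_nsmul (neg_ne_zero.2 hα0) (hLT.ne_bot_neg_neg hα0 hα) hγ hn' hi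

/-- The reflection in `a` is also the reflection in an indivisible root `a'`, for which
`0 ∈ Λ_{a'}`; the `a'`-string through `γ` in degree `0` then reaches the reflected root. -/
lemma ne_bot_reflection {a : 𝒳} (ha : a ∈ R.Δ) (ha0 : a ≠ 0) (hγ : g γ μ ≠ ⊥) :
    g (R.reflection a γ) μ ≠ ⊥ := by
  obtain ⟨a', ha', ha'0, hind, hrefl⟩ := exists_indivisible_reflection_eq ha ha0
  have h0 : g a' 0 ≠ ⊥ := hLT.lt2i a' ha' ha'0 hind
  obtain ⟨z, hz⟩ := R.pairing_int a' ha' ha'0 γ (hLT.supp_subset γ μ hγ)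
  rw [← hrefl, reflection_apply, hz]
  rcases z.eq_nat_or_neg with ⟨n, rfl | rfl⟩
  · simpa [Nat.cast_smul_eq_nsmul] using
      hLT.ne_bot_sub_nsmul ha'0 h0 hγ (n := n) (by simpa using hz) le_rfl
  · simpa [Nat.cast_smul_eq_nsmul] using
      hLT.ne_bot_add_nsmul ha'0 h0 hγ (n := n) (by simpa using hz) le_rfl

lemma ne_bot_neg_left (hγ0 : γ ≠ 0) (hγ : g γ μ ≠ ⊥) : g (-γ) μ ≠ ⊥ := by
  have hγΔ := hLT.supp_subset γ μ hγ
  simpa [reflection_self hγΔ hγ0] using hLT.ne_bot_reflection hγΔ hγ0 hγ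

lemma ne_bot_neg_right (hα0 : α ≠ 0) (hα : g α lam ≠ ⊥) : g α (-lam) ≠ ⊥ := by
  simpa using hLT.ne_bot_neg_left (neg_ne_zero.2 hα0) (hLT.ne_bot_neg_neg hα0 hα)

lemma ne_bot_of_mem_weylOrbit (ho : o ∈ R.weylOrbit β) (h : g o μ ≠ ⊥) : g β μ ≠ ⊥ := by
  refine weylOrbit_induction (P := fun x => g x μ ≠ ⊥ → g β μ ≠ ⊥) id ?_ ho h
  intro x a hx ha ha0 h'
  exact hx (reflection_reflection ha ha0 x ▸ hLT.ne_bot_reflection ha ha0 h')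

lemma ne_bot_zero_add (hα0 : α ≠ 0) {a b : Λ} (ha : g α a ≠ ⊥) (hb : g α b ≠ ⊥) :
    g 0 (a + b) ≠ ⊥ := by
  have h2 : R.coroot α α = (2 : ℕ) := by
    rw [coroot_apply_self (hLT.supp_subset α a ha) hα0, Nat.cast_ofNat]
  simpa using hLT.ne_bot_sub_nsmul hα0 (hLT.ne_bot_neg_right hα0 hb) ha h2 (i := 1) (by norm_num)

lemma ne_bot_add_add (hα0 : α ≠ 0) {mu : Λ} (hlam : g α lam ≠ ⊥) (hmu : g α mu ≠ ⊥) :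
    g α (lam + (mu + mu)) ≠ ⊥ := by
  have h2 : R.coroot α α = (2 : ℕ) := by
    rw [coroot_apply_self (hLT.supp_subset α lam hlam) hα0, Nat.cast_ofNat]
  have := hLT.ne_bot_sub_nsmul hα0 (hLT.ne_bot_neg_right hα0 hmu) hlam h2 le_rfl
  rw [two_nsmul, two_nsmul, sub_add_cancel_left, show lam - (-mu + -mu) = lam + (mu + mu) by abel]
    at this
  simpa using hLT.ne_bot_neg_left (neg_ne_zero.2 hα0) this

section IsShortRoot

variable {B : 𝒳 → 𝒳 → k} (hB : R.IsInvariantForm B) (hβ : R.IsShortRoot B β)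
include hB hβ

/-- Both `0 ∈ Λ_b` (as `b` is short, hence indivisible) and `lam ∈ Λ_a` propagate along the
`a`-string through `b`, so `lam ∈ Λ_{b + a}`; as `⟨b, a∨⟩ = -1`, reflecting in `a` gives back `b`. -/
lemma ne_bot_of_coroot_eq_neg {a b : 𝒳} (ha0 : a ≠ 0) (ha : g a lam ≠ ⊥) (hb : b ∈ R.Δ)
    (hb0 : b ≠ 0) (hbβ : B b b = B β β) {n : ℕ} (hn : R.coroot a b = -n) (hn1 : 1 ≤ n) :
    g b lam ≠ ⊥ := by
  have haΔ := hLT.supp_subset a lam ha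
  by_cases hba0 : b + a = 0
  · rw [eq_neg_of_add_eq_zero_left hba0]
    exact hLT.ne_bot_neg_left ha0 ha
  have hb₀ : g b 0 ≠ ⊥ := hLT.lt2i b hb hb0 (hβ.not_exists_eq_two_smul hB hb hb0 hbβ)
  have hba : g (b + a) lam ≠ ⊥ := by simpa using hLT.ne_bot_add_nsmul ha0 ha hb₀ hn hn1
  have hbaΔ := hLT.supp_subset _ _ hba
  have h1 : R.coroot a b = -1 := hβ.coroot_eq_neg_one hB haΔ ha0 hb hb0 hbβ
    (add_comm a b ▸ hbaΔ) (add_comm a b ▸ hba0) hn hn1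
  have := hLT.ne_bot_reflection haΔ ha0 hba
  rwa [reflection_apply, map_add, h1, coroot_apply_self haΔ ha0,
    show (-1 + 2 : k) = 1 by norm_num, one_smul, add_sub_cancel_right] at this

lemma ne_bot_of_isShortRoot (hα0 : α ≠ 0) (hα : g α lam ≠ ⊥) : g β lam ≠ ⊥ := by
  have hαΔ := hLT.supp_subset α lam hα
  obtain ⟨o, ho, hαo⟩ := exists_mem_weylOrbit_coroot_ne_zero hβ.mem hβ.ne_zero hαΔ hα0
  obtain ⟨z, hz⟩ := R.pairing_int α hαΔ hα0 o (mem_of_mem_weylOrbit hβ.mem hβ.ne_zero ho).1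
  obtain ⟨b, hb, n, hn, hn1⟩ : ∃ b ∈ R.weylOrbit β, ∃ n : ℕ, R.coroot α b = -n ∧ 1 ≤ n := by
    have hz0 : z ≠ 0 := by rintro rfl; simp [hz] at hαo
    rcases z.eq_nat_or_neg with ⟨n, rfl | rfl⟩
    · exact ⟨-o, neg_mem_weylOrbit hβ.mem hβ.ne_zero ho, n, by simp [hz], by omega⟩
    · exact ⟨o, ho, n, by simpa using hz, by omega⟩
  obtain ⟨hbΔ, hb0⟩ := mem_of_mem_weylOrbit hβ.mem hβ.ne_zero hb
  exact hLT.ne_bot_of_mem_weylOrbit hb (hLT.ne_bot_of_coroot_eq_neg hB hβ hα0 hα hbΔ hb0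
    (hB.apply_self_of_mem_weylOrbit hβ.mem hβ.ne_zero hb) hn hn1)

lemma ne_bot_isShortRoot_zero : g β 0 ≠ ⊥ :=
  hLT.lt2i β hβ.mem hβ.ne_zero (hβ.not_exists_eq_two_smul hB hβ.mem hβ.ne_zero rfl)

lemma ne_bot_zero_iff : g 0 lam ≠ ⊥ ↔ ∃ a b, g β a ≠ ⊥ ∧ g β b ≠ ⊥ ∧ lam = a + b := by
  refine ⟨fun h => ?_, fun ⟨a, b, ha, hb, hab⟩ => hab ▸ hLT.ne_bot_zero_add hβ.ne_zero ha hb⟩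
  obtain ⟨γ, hγ0, μ, ν, hμ, hν, rfl⟩ := hLT.exists_ne_bot_of_zero h
  exact ⟨μ, ν, hLT.ne_bot_of_isShortRoot hB hβ hγ0 hμ,
    hLT.ne_bot_of_isShortRoot hB hβ (neg_ne_zero.2 hγ0) hν, rfl⟩

lemma ne_bot_zero_of_ne_bot (h : g α lam ≠ ⊥) : g 0 lam ≠ ⊥ := by
  by_cases hα0 : α = 0
  · exact hα0 ▸ h
  · simpa using hLT.ne_bot_zero_add hβ.ne_zero (hLT.ne_bot_of_isShortRoot hB hβ hα0 h)
      (hLT.ne_bot_isShortRoot_zero hB hβ)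

lemma closure_eq_top : AddSubgroup.closure {lam | g β lam ≠ ⊥} = ⊤ := by
  rw [eq_top_iff, ← hLT.lt4, AddSubgroup.closure_le]
  rintro lam ⟨α, hα⟩
  obtain ⟨a, b, ha, hb, rfl⟩ := (hLT.ne_bot_zero_iff hB hβ).1 (hLT.ne_bot_zero_of_ne_bot hB hβ hα)
  exact add_mem (AddSubgroup.subset_closure ha) (AddSubgroup.subset_closure hb)

/-- `{mu | ∀ lam ∈ Λ_β, lam + 2 mu ∈ Λ_β}` is a subgroup containing `Λ_β`, which generates `Λ`. -/
lemma ne_bot_add_add_of_isShortRoot (hlam : g β lam ≠ ⊥) (mu : Λ) :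
    g β (lam + (mu + mu)) ≠ ⊥ := by
  have hmu : mu ∈ AddSubgroup.closure {lam | g β lam ≠ ⊥} :=
    hLT.closure_eq_top hB hβ ▸ AddSubgroup.mem_top mu
  induction hmu using AddSubgroup.closure_induction generalizing lam with
  | mem mu hmu => exact hLT.ne_bot_add_add hβ.ne_zero hlam hmu
  | zero => simpa using hlam
  | add a b _ _ ha hb =>
    rw [add_add_add_comm, ← add_assoc]
    exact hb (ha hlam)
  | neg a _ ha =>
    simpa [add_comm] using
      hLT.ne_bot_neg_right hβ.ne_zero (ha (hLT.ne_bot_neg_right hβ.ne_zero hlam))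

end IsShortRoot

end IsLieTorus

/-- For a short root `β` of `Δ` (shortness is expressed via an invariant symmetric form `B`
compatible with the coroots: every root length ratio `B α α / B β β` is a rational `≥ 1`),
the Lie torus `L` satisfies `supp_Λ(L) = Λ_0 = Λ_β + Λ_β`, `Λ = ⟨Λ_β⟩`,
`Λ_β + 2Λ ⊆ Λ_β`, `2Λ ⊆ Λ_β`, and in particular `2Λ ⊆ supp_Λ(L)`. -/
theorem stmt19 {k 𝒳 Λ L : Type*} [Field k] [CharZero k] [AddCommGroup 𝒳] [Module k 𝒳]
    [DecidableEq 𝒳] [AddCommGroup Λ] [DecidableEq Λ] [LieRing L] [LieAlgebra k L]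
    (R : RootSystemIn k 𝒳) (g : 𝒳 → Λ → Submodule k L) (hLT : IsLieTorus R g)
    (B : 𝒳 → 𝒳 → k)
    (hBsym : ∀ x y : 𝒳, B x y = B y x)
    (hBne : ∀ α ∈ R.Δ, α ≠ 0 → B α α ≠ 0)
    (hBcoroot : ∀ α ∈ R.Δ, α ≠ 0 → ∀ x : 𝒳, B α α * R.coroot α x = 2 * B x α)
    (β : 𝒳) (hβΔ : β ∈ R.Δ) (hβ0 : β ≠ 0)
    (hβshort : ∀ α ∈ R.Δ, α ≠ 0 → ∃ c : ℚ, 1 ≤ c ∧ B α α = (c : k) * B β β) :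
    ({lam : Λ | ∃ α : 𝒳, g α lam ≠ ⊥} = {lam : Λ | g 0 lam ≠ ⊥}) ∧
    ({lam : Λ | g 0 lam ≠ ⊥} =
      {lam : Λ | ∃ a b : Λ, g β a ≠ ⊥ ∧ g β b ≠ ⊥ ∧ lam = a + b}) ∧
    (AddSubgroup.closure {lam : Λ | g β lam ≠ ⊥} = ⊤) ∧
    (∀ lam : Λ, g β lam ≠ ⊥ → ∀ mu : Λ, g β (lam + (mu + mu)) ≠ ⊥) ∧
    (∀ mu : Λ, g β (mu + mu) ≠ ⊥) ∧
    (∀ mu : Λ, ∃ α : 𝒳, g α (mu + mu) ≠ ⊥) := by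
  have hB : R.IsInvariantForm B := ⟨hBsym, hBne, hBcoroot⟩
  have hβ : R.IsShortRoot B β := ⟨hβΔ, hβ0, hβshort⟩
  have htwo : ∀ mu : Λ, g β (mu + mu) ≠ ⊥ := fun mu => by
    simpa using hLT.ne_bot_add_add_of_isShortRoot hB hβ (hLT.ne_bot_isShortRoot_zero hB hβ) mu
  refine ⟨?_, Set.ext fun lam => hLT.ne_bot_zero_iff hB hβ, hLT.closure_eq_top hB hβ,
    fun lam hlam => hLT.ne_bot_add_add_of_isShortRoot hB hβ hlam, htwo, fun mu => ⟨β, htwo mu⟩⟩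
  exact Set.ext fun lam => ⟨fun ⟨α, hα⟩ => hLT.ne_bot_zero_of_ne_bot hB hβ hα, fun h => ⟨0, h⟩⟩
end
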